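/- arXiv:1408.0904 — 9 statements merged into one kernel-verified Lean document; each statement's English description precedes it below -/
import Mathlib

section
/- Let p* ∈ (0,1) be the unique solution of p·e^p = 1. Then: (i) for every p with p* ≤ p ≤ 1 and every real x > 0 one has p·x + p^x ≥ p·x + e^{-p·x} > 1; (ii) for every p with 0 < p < p* there exists a real x > 0 with p·x + p^x < 1. In particular, p* is the smallest value of p ∈ (0,1] such that the equation p·x + p^x = 1 has no positive solution x. -/
/-- Let `p* ∈ (0,1)` be the unique solution of `p·e^p = 1`. Then (i) for `p* ≤ p ≤ 1` and
every `x > 0`, `p·x + p^x ≥ p·x + e^{-p·x} > 1`; (ii) for `0 < p < p*` there is `x > 0`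
with `p·x + p^x < 1`. In particular, `p*` is the smallest `p ∈ (0,1]` such that
`p·x + p^x = 1` has no positive solution `x`. -/
theorem stmt_1 (pstar : ℝ) (hp0 : 0 < pstar) (hp1 : pstar < 1)
    (hps : pstar * Real.exp pstar = 1) :
    (∀ p : ℝ, pstar ≤ p → p ≤ 1 → ∀ x : ℝ, 0 < x →
        p * x + p ^ x ≥ p * x + Real.exp (-(p * x)) ∧
        p * x + Real.exp (-(p * x)) > 1) ∧
    (∀ p : ℝ, 0 < p → p < pstar → ∃ x : ℝ, 0 < x ∧ p * x + p ^ x < 1) ∧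
    IsLeast {p : ℝ | (0 < p ∧ p ≤ 1) ∧ ¬ ∃ x : ℝ, 0 < x ∧ p * x + p ^ x = 1} pstar := by
  have part1 : ∀ p : ℝ, pstar ≤ p → p ≤ 1 → ∀ x : ℝ, 0 < x →
      p * x + p ^ x ≥ p * x + Real.exp (-(p * x)) ∧
      p * x + Real.exp (-(p * x)) > 1 := by
    intro p hp hple x hx
    have hp0' : 0 < p := lt_of_lt_of_le hp0 hp
    have h1 : (1:ℝ) ≤ p * Real.exp p := by
      calc (1:ℝ) = pstar * Real.exp pstar := hps.symm
        _ ≤ p * Real.exp p :=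
          mul_le_mul hp (Real.exp_le_exp.2 hp) (Real.exp_pos _).le hp0'.le
    have hlog : 0 ≤ Real.log p + p := by
      have h2 : Real.exp 0 ≤ Real.exp (Real.log p + p) := by
        rw [Real.exp_add, Real.exp_log hp0', Real.exp_zero]; exact h1
      linarith [Real.exp_le_exp.1 h2]
    constructor
    · have h3 : Real.exp (-(p * x)) ≤ Real.exp (Real.log p * x) := by
        apply Real.exp_le_exp.2
        nlinarith
      rw [Real.rpow_def_of_pos hp0']
      linarith
    · have h4 := Real.add_one_lt_exp (x := -(p * x)) (by nlinarith [mul_pos hp0' hx])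
      nlinarith [mul_pos hp0' hx]
  have part2 : ∀ p : ℝ, 0 < p → p < pstar → ∃ x : ℝ, 0 < x ∧ p * x + p ^ x < 1 := by
    intro p hp hpps
    have hL0 : Real.log p < 0 := Real.log_neg hp (hpps.trans hp1)
    set L := Real.log p with hLdef
    have hδ : p + L < 0 := by
      have h1 : p * Real.exp p < 1 := by
        calc p * Real.exp p < pstar * Real.exp pstar := by
              have := Real.exp_le_exp.2 hpps.le
              nlinarith [Real.exp_pos p, Real.exp_pos pstar]
          _ = 1 := hps
      have h2 : Real.exp (L + p) < Real.exp 0 := by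
        rw [Real.exp_add, Real.exp_log hp, Real.exp_zero]; exact h1
      linarith [Real.exp_lt_exp.1 h2]
    set x : ℝ := (-(p + L)) / (2 * p * (-L)) with hxdef
    have hLpos : 0 < -L := by linarith
    have hδpos : 0 < -(p + L) := by linarith
    have hx : 0 < x := by positivity
    refine ⟨x, hx, ?_⟩
    have hxL : p * x * L = -(-(p + L)) / 2 := by
      rw [hxdef]; field_simp [hp.ne', hL0.ne]
    have hu : 0 < 1 - L * x := by nlinarith [mul_pos hLpos hx]
    -- exp bound: exp(L*x) ≤ 1/(1-L*x)
    have h1 : 1 - L * x ≤ Real.exp (-(L * x)) := by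
      linarith [Real.add_one_le_exp (-(L * x))]
    have hexp : Real.exp (L * x) ≤ 1 / (1 - L * x) := by
      rw [le_div_iff₀ hu]
      calc Real.exp (L * x) * (1 - L * x) ≤ Real.exp (L * x) * Real.exp (-(L * x)) :=
            mul_le_mul_of_nonneg_left h1 (Real.exp_pos _).le
        _ = 1 := by rw [← Real.exp_add]; simp
    rw [Real.rpow_def_of_pos hp]
    have hfin : 1 / (1 - L * x) < 1 - p * x := by
      rw [div_lt_iff₀ hu]
      nlinarith [mul_pos hx hδpos]
    calc p * x + Real.exp (L * x) ≤ p * x + 1 / (1 - L * x) := by linarith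
      _ < 1 := by linarith
  refine ⟨part1, part2, ⟨⟨hp0, hp1.le⟩, ?_⟩, ?_⟩
  · rintro ⟨x, hx, hfx⟩
    obtain ⟨h1, h2⟩ := part1 pstar le_rfl hp1.le x hx
    linarith
  · rintro p ⟨⟨hp, hple⟩, hne⟩
    by_contra hlt
    push_neg at hlt
    obtain ⟨x0, hx0, hfx0⟩ := part2 p hp hlt
    apply hne
    set f : ℝ → ℝ := fun x => p * x + Real.exp (Real.log p * x) with hf
    have hfeq : ∀ x : ℝ, f x = p * x + p ^ x := by
      intro x; rw [Real.rpow_def_of_pos hp]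
    have hcont : Continuous f := by fun_prop
    have hXle : x0 ≤ x0 + 1 / p := by
      have : 0 < 1 / p := by positivity
      linarith
    have hfx0' : f x0 ≤ 1 := by rw [hfeq]; linarith
    have hfX : 1 ≤ f (x0 + 1 / p) := by
      have hpx : p * (x0 + 1 / p) = p * x0 + 1 := by field_simp
      show p * (x0 + 1 / p) + Real.exp (Real.log p * (x0 + 1 / p)) ≥ 1
      rw [hpx]
      nlinarith [Real.exp_pos (Real.log p * (x0 + 1 / p)), mul_pos hp hx0]
    obtain ⟨x, hxmem, hfx⟩ := intermediate_value_Icc hXle hcont.continuousOn ⟨hfx0', hfX⟩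
    exact ⟨x, lt_of_lt_of_le hx0 hxmem.1, by rw [← hfeq]; exact hfx⟩
end

section
/- There is a nonnegative, integrable random variable X_∞, measurable with respect to the σ-algebra generated by ∪_{n ≥ n0} F_n, with E[X_∞] ≤ x0 · Γ(n0)/Γ(n0+a), such that n^{-a} · X_n → X_∞ almost surely as n → ∞. -/
/-!
With `p n = ∏_{k < n} (1 + a / (n0 + k))`, the process `X (n0 + n) / p n` is a nonnegative
martingale, hence converges almost surely, and by Fatou its limit has expectation at most `x0`.
Euler's limit formula `Γ(s) = lim n^s n! / (s (s+1) ⋯ (s+n))` gives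
`n^{-a} p (n - n0) → Γ(n0) / Γ(n0 + a)`, so `n^{-a} X n` converges to that constant times the
martingale limit.
-/

open MeasureTheory Filter Finset Topology

section GrowthFactor

/-- The growth factor `E[X (n0 + n)] / E[X n0]`, with `s` in place of `n0`. -/
noncomputable def growthFactor (s a : ℝ) (n : ℕ) : ℝ :=
  ∏ k ∈ range n, (1 + a / (s + k))

variable {s a : ℝ}

lemma one_add_div_add_natCast_pos (hs : 0 < s) (hsa : 0 < s + a) (k : ℕ) :
    0 < 1 + a / (s + k) := by
  have hk : (0 : ℝ) ≤ k := k.cast_nonneg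
  rw [one_add_div (by positivity)]
  exact div_pos (by linarith) (by positivity)

lemma growthFactor_pos (hs : 0 < s) (hsa : 0 < s + a) (n : ℕ) : 0 < growthFactor s a n :=
  prod_pos fun k _ => one_add_div_add_natCast_pos hs hsa k

lemma Real.GammaSeq_div_GammaSeq_add (hs : 0 < s) (hsa : 0 < s + a) {n : ℕ} (hn : n ≠ 0) :
    Real.GammaSeq s n / Real.GammaSeq (s + a) n = (n : ℝ) ^ (-a) * growthFactor s a (n + 1) := by
  have hn' : (0 : ℝ) < n := by positivity
  have hprod : growthFactor s a (n + 1)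
      = (∏ k ∈ range (n + 1), (s + a + k)) / ∏ k ∈ range (n + 1), (s + k) := by
    rw [growthFactor, ← prod_div_distrib]
    refine prod_congr rfl fun k _ => ?_
    rw [one_add_div (by positivity)]
    ring
  have hP : 0 < ∏ k ∈ range (n + 1), (s + a + k) := prod_pos fun k _ => by positivity
  have hQ : 0 < ∏ k ∈ range (n + 1), (s + k) := prod_pos fun k _ => by positivity
  have hrpow : (n : ℝ) ^ (-a) = (n : ℝ) ^ s / (n : ℝ) ^ (s + a) := by
    rw [← Real.rpow_sub hn']
    ring_nf
  have := Real.rpow_pos_of_pos hn' (s + a)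
  rw [Real.GammaSeq, Real.GammaSeq, hprod, hrpow]
  field_simp

lemma tendsto_rpow_neg_mul_growthFactor_succ (hs : 0 < s) (hsa : 0 < s + a) :
    Tendsto (fun n : ℕ => (n : ℝ) ^ (-a) * growthFactor s a (n + 1)) atTop
      (𝓝 (Real.Gamma s / Real.Gamma (s + a))) :=
  ((Real.GammaSeq_tendsto_Gamma s).div (Real.GammaSeq_tendsto_Gamma (s + a))
    (Real.Gamma_pos_of_pos hsa).ne').congr'
    (eventually_ne_atTop 0 |>.mono fun _ hn => Real.GammaSeq_div_GammaSeq_add hs hsa hn)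

lemma tendsto_rpow_neg_mul_growthFactor_sub (hs : 0 < s) (hsa : 0 < s + a) (d : ℕ) :
    Tendsto (fun n : ℕ => (n : ℝ) ^ (-a) * growthFactor s a (n - d)) atTop
      (𝓝 (Real.Gamma s / Real.Gamma (s + a))) := by
  -- at index `n + d + 1`, the factor `(n / (n + d + 1))^a → 1` turns `n^{-a}` into
  -- `(n + d + 1)^{-a}`
  rw [← tendsto_add_atTop_iff_nat (d + 1)]
  have hratio : Tendsto (fun n : ℕ => ((n : ℝ) / (n + (d + 1))) ^ a) atTop (𝓝 1) := by
    simpa [Function.comp_def] using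
      (Real.continuousAt_rpow_const 1 a (Or.inl one_ne_zero)).tendsto.comp
        (tendsto_natCast_div_add_atTop ((d : ℝ) + 1))
  refine (one_mul (Real.Gamma s / Real.Gamma (s + a)) ▸
    hratio.mul (tendsto_rpow_neg_mul_growthFactor_succ hs hsa)).congr' ?_
  filter_upwards [eventually_ne_atTop 0] with n hn
  have hn' : (0 : ℝ) < n := by positivity
  have hd : (0 : ℝ) < n + (d + 1) := by positivity
  have := Real.rpow_pos_of_pos hn' a
  rw [show n + (d + 1) - d = n + 1 by omega, Real.div_rpow hn'.le hd.le, Real.rpow_neg hn'.le,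
    Nat.cast_add, Nat.cast_add, Nat.cast_one, Real.rpow_neg hd.le]
  field_simp

end GrowthFactor

namespace MeasureTheory

variable {Ω : Type*} {m0 : MeasurableSpace Ω} {μ : Measure Ω}

def Filtration.shiftNat (ℱ : Filtration ℕ m0) (d : ℕ) : Filtration ℕ m0 where
  seq n := ℱ (d + n)
  mono' _ _ h := ℱ.mono (Nat.add_le_add_left h d)
  le' _ := ℱ.le _

lemma martingale_inv_prod_smul_of_condExp_succ [IsFiniteMeasure μ] {ℱ : Filtration ℕ m0}
    {X : ℕ → Ω → ℝ} {c : ℕ → ℝ} (hc : ∀ n, c n ≠ 0) (hadp : StronglyAdapted ℱ X)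
    (hint : ∀ n, Integrable (X n) μ) (hrec : ∀ n, μ[X (n + 1) | ℱ n] =ᵐ[μ] c n • X n) :
    Martingale (fun n => (∏ k ∈ range n, c k)⁻¹ • X n) ℱ μ := by
  refine martingale_nat (fun n => (hadp n).const_smul _) (fun n => (hint n).smul _) fun n => ?_
  filter_upwards [condExp_smul (∏ k ∈ range (n + 1), c k)⁻¹ (X (n + 1)) (ℱ n), hrec n]
    with ω hsmul hX
  simp only [Pi.smul_apply] at hsmul hX ⊢
  rw [hsmul, hX, smul_smul, prod_range_succ, mul_inv, mul_assoc, inv_mul_cancel₀ (hc n), mul_one]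

lemma eLpNorm_one_eq_ofReal_integral {f : Ω → ℝ} (hf : Integrable f μ) (hnn : 0 ≤ᵐ[μ] f) :
    eLpNorm f 1 μ = ENNReal.ofReal (∫ ω, f ω ∂μ) := by
  rw [eLpNorm_one_eq_lintegral_enorm, ofReal_integral_eq_lintegral_ofReal hf hnn]
  exact lintegral_congr_ae (hnn.mono fun _ h => Real.enorm_of_nonneg h)

theorem Martingale.exists_ae_tendsto_of_nonneg [IsFiniteMeasure μ] {ℱ : Filtration ℕ m0}
    {f : ℕ → Ω → ℝ} (hf : Martingale f ℱ μ) (hnn : ∀ n, 0 ≤ᵐ[μ] f n) :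
    ∃ g : Ω → ℝ, StronglyMeasurable[⨆ n, ℱ n] g ∧ Integrable g μ ∧ 0 ≤ᵐ[μ] g ∧
      ∫ ω, g ω ∂μ ≤ ∫ ω, f 0 ω ∂μ ∧
      ∀ᵐ ω ∂μ, Tendsto (fun n => f n ω) atTop (𝓝 (g ω)) := by
  have hbdd : ∀ n, eLpNorm (f n) 1 μ ≤ ENNReal.ofReal (∫ ω, f 0 ω ∂μ) := fun n => le_of_eq <| by
    rw [eLpNorm_one_eq_ofReal_integral (hf.integrable n) (hnn n), ← setIntegral_univ,
      ← hf.setIntegral_eq (Nat.zero_le n) MeasurableSet.univ, setIntegral_univ]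
  have htend := hf.submartingale.ae_tendsto_limitProcess hbdd
  have hint : Integrable (ℱ.limitProcess f μ) μ :=
    memLp_one_iff_integrable.mp (hf.submartingale.memLp_limitProcess hbdd)
  have hlim_nn : 0 ≤ᵐ[μ] ℱ.limitProcess f μ := by
    filter_upwards [htend, ae_all_iff.2 hnn] with ω hω hnnω
    exact ge_of_tendsto' hω hnnω
  refine ⟨_, Filtration.stronglyMeasurable_limitProcess, hint, hlim_nn, ?_, htend⟩
  -- Fatou's lemma, in the form of lower semicontinuity of the L¹ seminorm
  have hfatou := Lp.eLpNorm_le_of_ae_tendsto (.of_forall hbdd)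
    (fun n => (hf.integrable n).aestronglyMeasurable) htend
  rw [eLpNorm_one_eq_ofReal_integral hint hlim_nn] at hfatou
  exact (ENNReal.ofReal_le_ofReal_iff (integral_nonneg_of_ae (hnn 0))).mp hfatou

end MeasureTheory

theorem stmt_5_general {Ω : Type*} {m0 : MeasurableSpace Ω} (μ : Measure Ω) [IsProbabilityMeasure μ]
    (n0 : ℕ) (hn0 : 1 ≤ n0) (a : ℝ) (ha : -(n0 : ℝ) < a)
    (ℱ : Filtration ℕ m0) (X : ℕ → Ω → ℝ)
    (hnn : ∀ n, n0 ≤ n → ∀ᵐ ω ∂μ, 0 ≤ X n ω)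
    (hint : ∀ n, n0 ≤ n → Integrable (X n) μ)
    (hadp : ∀ n, n0 ≤ n → StronglyMeasurable[ℱ n] (X n))
    (hrec : ∀ n, n0 ≤ n → μ[X (n + 1) | ℱ n] =ᵐ[μ] fun ω => (1 + a / n) * X n ω) :
    ∃ Xinf : Ω → ℝ,
      StronglyMeasurable[⨆ n, ℱ (n0 + n)] Xinf ∧
      Integrable Xinf μ ∧
      (∀ᵐ ω ∂μ, 0 ≤ Xinf ω) ∧
      (∫ ω, Xinf ω ∂μ)
        ≤ (∫ ω, X n0 ω ∂μ) * Real.Gamma (n0 : ℝ) / Real.Gamma ((n0 : ℝ) + a) ∧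
      ∀ᵐ ω ∂μ, Tendsto (fun n : ℕ => (n : ℝ) ^ (-a) * X n ω) atTop (nhds (Xinf ω)) := by
  have hs : (0 : ℝ) < n0 := by exact_mod_cast hn0
  have hsa : 0 < (n0 : ℝ) + a := by linarith
  have hmart : Martingale (fun n => (growthFactor n0 a n)⁻¹ • X (n0 + n)) (ℱ.shiftNat n0) μ :=
    martingale_inv_prod_smul_of_condExp_succ
      (fun n => (one_add_div_add_natCast_pos hs hsa n).ne')
      (fun n => hadp _ (n0.le_add_right n)) (fun n => hint _ (n0.le_add_right n))
      fun n => by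
        have h := hrec _ (n0.le_add_right n)
        push_cast at h
        exact h
  obtain ⟨Y, hYm, hYint, hYnn, hYle, hY⟩ := hmart.exists_ae_tendsto_of_nonneg fun n =>
    (hnn _ (n0.le_add_right n)).mono fun _ h =>
      smul_nonneg (inv_nonneg.2 (growthFactor_pos hs hsa n).le) h
  set C := Real.Gamma n0 / Real.Gamma (n0 + a)
  have hC : 0 ≤ C := div_nonneg (Real.Gamma_pos_of_pos hs).le (Real.Gamma_pos_of_pos hsa).le
  refine ⟨fun ω => C * Y ω, hYm.const_mul C, hYint.const_mul C,
    hYnn.mono fun _ h => mul_nonneg hC h, ?_, ?_⟩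
  · rw [integral_const_mul, mul_div_assoc, mul_comm _ C]
    exact mul_le_mul_of_nonneg_left (by simpa [growthFactor] using hYle) hC
  · filter_upwards [hY] with ω hω
    refine ((tendsto_rpow_neg_mul_growthFactor_sub hs hsa n0).mul
      (hω.comp (tendsto_sub_atTop_nat n0))).congr' ?_
    filter_upwards [eventually_ge_atTop n0] with n hn
    simp only [Function.comp_apply, Pi.smul_apply, smul_eq_mul, Nat.add_sub_cancel' hn]
    rw [mul_assoc, mul_inv_cancel_left₀ (growthFactor_pos hs hsa _).ne']

/-- There is a nonnegative, integrable random variable `X_∞`, measurable w.r.t. the σ-algebra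
generated by `⋃_{n ≥ n0} ℱ_n`, with `E[X_∞] ≤ x0 · Γ(n0)/Γ(n0+a)`, such that
`n^{-a} · X_n → X_∞` almost surely. -/
theorem stmt_5 {Ω : Type*} {m0 : MeasurableSpace Ω} (μ : Measure Ω) [IsProbabilityMeasure μ]
    (n0 : ℕ) (hn0 : 1 ≤ n0) (a : ℝ) (ha : -(n0 : ℝ) < a)
    (ℱ : Filtration ℕ m0) (X : ℕ → Ω → ℝ)
    (hnn : ∀ n, n0 ≤ n → ∀ᵐ ω ∂μ, 0 ≤ X n ω)
    (hint : ∀ n, n0 ≤ n → Integrable (X n) μ)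
    (hadp : ∀ n, n0 ≤ n → StronglyMeasurable[ℱ n] (X n))
    (hrec : ∀ n, n0 ≤ n → μ[X (n + 1) | ℱ n] =ᵐ[μ] fun ω => (1 + a / n) * X n ω)
    (hx0 : 0 < ∫ ω, X n0 ω ∂μ) :
    ∃ Xinf : Ω → ℝ,
      StronglyMeasurable[⨆ n, ℱ (n0 + n)] Xinf ∧
      Integrable Xinf μ ∧
      (∀ᵐ ω ∂μ, 0 ≤ Xinf ω) ∧
      (∫ ω, Xinf ω ∂μ)
        ≤ (∫ ω, X n0 ω ∂μ) * Real.Gamma (n0 : ℝ) / Real.Gamma ((n0 : ℝ) + a) ∧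
      ∀ᵐ ω ∂μ, Tendsto (fun n : ℕ => (n : ℝ) ^ (-a) * X n ω) atTop (nhds (Xinf ω)) :=
  stmt_5_general μ n0 hn0 a ha ℱ X hnn hint hadp hrec
end

section
/- If there is ε > 0 such that g(n) = O(n^{a-ε}) as n → ∞, then f(n) = Θ(n^a) as n → ∞; that is, there are constants 0 < c1 ≤ c2 and N such that c1 · n^a ≤ f(n) ≤ c2 · n^a for all n ≥ N. -/
/-!
Writing `P n = ∏_{n0 ≤ k < n} (1 + a / k)`, variation of constants solves the recursion:
`f n = P n * (f n0 + ∑_{n0 ≤ k < n} g k / (k * P (k + 1)))`.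
Since `1 + a / k = (k + a) / k`, the product `P` is a ratio of rising factorials, and Euler's
limit formula for `Γ` gives `P n ~ Γ(n0) / Γ(n0 + a) * n ^ a`. The summands are then
`O(k ^ (-1 - ε))`, so the bracket increases to a finite positive limit and `f n ~ c * n ^ a`
with `c > 0`.
-/

open Filter Asymptotics Finset Real Topology

theorem prod_range_succ_div_eq_GammaSeq {x y : ℝ} (hx : 0 < x) (hy : 0 < y) {m : ℕ}
    (hm : m ≠ 0) :
    ∏ j ∈ range (m + 1), (y + j) / (x + j) =
      GammaSeq x m / GammaSeq y m * (m : ℝ) ^ (y - x) := by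
  have hm' : (0 : ℝ) < m := by positivity
  have hQx : 0 < ∏ j ∈ range (m + 1), (x + j) := prod_pos fun j _ => by positivity
  have hQy : 0 < ∏ j ∈ range (m + 1), (y + j) := prod_pos fun j _ => by positivity
  have hfact : (0 : ℝ) < m.factorial := by positivity
  rw [prod_div_distrib, GammaSeq, GammaSeq, rpow_sub hm']
  field_simp

theorem isEquivalent_prod_range_succ_div {x y : ℝ} (hx : 0 < x) (hy : 0 < y) :
    (fun m : ℕ => ∏ j ∈ range (m + 1), (y + j) / (x + j)) ~[atTop]
      fun m => Gamma x / Gamma y * (m : ℝ) ^ (y - x) := by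
  have hratio : (fun m => GammaSeq x m / GammaSeq y m) ~[atTop] fun _ => Gamma x / Gamma y :=
    (isEquivalent_const_iff_tendsto (div_pos (Gamma_pos_of_pos hx) (Gamma_pos_of_pos hy)).ne').2
      ((GammaSeq_tendsto_Gamma x).div (GammaSeq_tendsto_Gamma y) (Gamma_pos_of_pos hy).ne')
  refine (hratio.mul (IsEquivalent.refl (u := fun m : ℕ => (m : ℝ) ^ (y - x)))).congr_left ?_
  filter_upwards [eventually_ne_atTop 0] with m hm
  exact (prod_range_succ_div_eq_GammaSeq hx hy hm).symm

theorem isEquivalent_natCast_sub_rpow (c : ℕ) (b : ℝ) :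
    (fun n : ℕ => ((n - c : ℕ) : ℝ) ^ b) ~[atTop] fun n => (n : ℝ) ^ b := by
  have hsub : (fun n : ℕ => ((n - c : ℕ) : ℝ)) ~[atTop] fun n => (n : ℝ) := by
    refine (IsEquivalent.refl.add_const_of_norm_tendsto_atTop (c := -(c : ℝ)) ?_).congr_left ?_
    · exact tendsto_norm_atTop_atTop.comp tendsto_natCast_atTop_atTop
    · filter_upwards [eventually_ge_atTop c] with n hn
      push_cast [hn]
      ring
  exact hsub.rpow fun n => Nat.cast_nonneg n

theorem Asymptotics.IsEquivalent.eventually_half_le_and_le_two {α : Type*} {l : Filter α}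
    {u v : α → ℝ} (h : u ~[l] v) (hv : ∀ᶠ x in l, 0 ≤ v x) :
    ∀ᶠ x in l, v x / 2 ≤ u x ∧ u x ≤ 2 * v x := by
  obtain ⟨φ, hφ, huφ⟩ := h.exists_eq_mul
  have hφ_near : ∀ᶠ x in l, φ x ∈ Set.Icc (1 / 2 : ℝ) 2 :=
    hφ.eventually (Icc_mem_nhds (by norm_num) (by norm_num))
  filter_upwards [huφ, hv, hφ_near] with x hx hvx hφx
  rw [hx, Pi.mul_apply]
  constructor <;> nlinarith [hφx.1, hφx.2]

theorem tendsto_sum_Ico_tsum {T : ℕ → ℝ} (hT : Summable T) (n0 : ℕ) :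
    Tendsto (fun n => ∑ k ∈ Ico n0 n, T k) atTop (𝓝 (∑' j, T (j + n0))) := by
  refine (((summable_nat_add_iff n0).2 hT).hasSum.tendsto_sum_nat.comp
    (tendsto_sub_atTop_nat n0)).congr fun n => ?_
  simp only [Function.comp_apply, sum_Ico_eq_sum_range, add_comm n0]

theorem eq_prod_mul_add_sum_of_rec {n0 : ℕ} {u v r : ℕ → ℝ} (hr : ∀ n, n0 ≤ n → r n ≠ 0)
    (hu : ∀ n, n0 ≤ n → u (n + 1) = r n * u n + v n) {n : ℕ} (hn : n0 ≤ n) :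
    u n = (∏ k ∈ Ico n0 n, r k) *
      (u n0 + ∑ k ∈ Ico n0 n, v k / ∏ i ∈ Ico n0 (k + 1), r i) := by
  induction n, hn using Nat.le_induction with
  | base => simp
  | succ n hn ih =>
    have hprod : ∏ i ∈ Ico n0 (n + 1), r i = (∏ i ∈ Ico n0 n, r i) * r n :=
      prod_Ico_succ_top hn _
    have hne : ∏ i ∈ Ico n0 n, r i ≠ 0 :=
      prod_ne_zero_iff.2 fun i hi => hr i (mem_Ico.1 hi).1
    rw [hu n hn, ih, sum_Ico_succ_top hn, hprod]
    field_simp [hr n hn, hne]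
    ring

noncomputable def growthProd (n0 : ℕ) (a : ℝ) (n : ℕ) : ℝ := ∏ k ∈ Ico n0 n, (1 + a / k)

section growthProd

variable {n0 : ℕ} {a : ℝ}

theorem one_add_div_pos (hn0 : 1 ≤ n0) (ha : -(n0 : ℝ) < a) {k : ℕ} (hk : n0 ≤ k) :
    0 < 1 + a / k := by
  have hk' : (n0 : ℝ) ≤ k := by exact_mod_cast hk
  have hk0 : (0 : ℝ) < k := by exact_mod_cast hn0.trans hk
  have hdiv : -1 < a / k := by rw [lt_div_iff₀ hk0]; linarith
  linarith

theorem growthProd_pos (hn0 : 1 ≤ n0) (ha : -(n0 : ℝ) < a) (n : ℕ) : 0 < growthProd n0 a n :=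
  prod_pos fun _ hk => one_add_div_pos hn0 ha (mem_Ico.1 hk).1

theorem isEquivalent_growthProd (hn0 : 1 ≤ n0) (ha : -(n0 : ℝ) < a) :
    growthProd n0 a ~[atTop] fun n => Gamma n0 / Gamma (n0 + a) * (n : ℝ) ^ a := by
  have hx : (0 : ℝ) < n0 := by exact_mod_cast hn0
  -- `growthProd n0 a n` is the product of `(n0 + a + j) / (n0 + j)` over `j < n - (n0 + 1) + 1`.
  have hshift := (isEquivalent_prod_range_succ_div hx (by linarith : (0 : ℝ) < n0 + a))
    |>.comp_tendsto (tendsto_sub_atTop_nat (n0 + 1))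
  simp only [add_sub_cancel_left] at hshift
  refine (hshift.trans (IsEquivalent.refl.mul (isEquivalent_natCast_sub_rpow (n0 + 1) a)))
    |>.congr_left ?_
  filter_upwards [eventually_gt_atTop n0] with n hn
  simp only [Function.comp_apply, growthProd]
  rw [Nat.sub_add_eq, Nat.sub_add_cancel (Nat.sub_pos_of_lt hn), prod_Ico_eq_prod_range]
  refine prod_congr rfl fun j _ => ?_
  have hj : (0 : ℝ) < n0 + j := by positivity
  push_cast
  field_simp
  ring

theorem isEquivalent_growthProd_succ (hn0 : 1 ≤ n0) (ha : -(n0 : ℝ) < a) :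
    (fun n => growthProd n0 a (n + 1)) ~[atTop]
      fun n => Gamma n0 / Gamma (n0 + a) * (n : ℝ) ^ a := by
  have hfactor : (fun k : ℕ => 1 + a / k) ~[atTop] fun _ => 1 :=
    (isEquivalent_const_iff_tendsto one_ne_zero).2 <| by
      simpa using tendsto_const_nhds.add (tendsto_const_div_atTop_nhds_zero_nat a)
  refine ((isEquivalent_growthProd hn0 ha).mul hfactor).congr_left ?_ |>.congr_right ?_
  · filter_upwards [eventually_ge_atTop n0] with n hn
    exact (prod_Ico_succ_top hn _).symm
  · simp [Pi.mul_def]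

theorem summable_div_growthProd_succ {ε : ℝ} (hn0 : 1 ≤ n0) (ha : -(n0 : ℝ) < a) (hε : 0 < ε)
    {g : ℕ → ℝ} (hg : g =O[atTop] fun n : ℕ => (n : ℝ) ^ (a - ε)) :
    Summable fun k : ℕ => g k / k / growthProd n0 a (k + 1) := by
  set κ := Gamma n0 / Gamma (n0 + a)
  have hinv : (fun k : ℕ => (k : ℝ)⁻¹) = fun k : ℕ => (k : ℝ) ^ (-1 : ℝ) := by
    simp [rpow_neg_one]
  have hbound : (fun k : ℕ => g k / k / growthProd n0 a (k + 1)) =O[atTop]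
      fun k : ℕ => (k : ℝ) ^ (a - ε) * (k : ℝ) ^ (-1 : ℝ) * (κ * (k : ℝ) ^ a)⁻¹ := by
    simp only [div_eq_mul_inv]
    exact (hg.mul (hinv ▸ isBigO_refl _ _)).mul (isEquivalent_growthProd_succ hn0 ha).inv.isBigO
  refine summable_of_isBigO_nat
    ((Real.summable_nat_rpow.2 (by linarith : -1 - ε < -1)).mul_left κ⁻¹)
    (hbound.trans (EventuallyEq.isBigO ?_))
  filter_upwards [eventually_gt_atTop 0] with k hk
  have hk' : (0 : ℝ) < k := by exact_mod_cast hk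
  rw [mul_inv, ← rpow_neg hk'.le, show -1 - ε = (a - ε) + -1 + -a by ring, rpow_add hk',
    rpow_add hk']
  ring

end growthProd

/-- If `g(n) = O(n^{a-ε})` for some `ε > 0`, then `f(n) = Θ(n^a)`: there are constants
`0 < c1 ≤ c2` and `N` with `c1·n^a ≤ f(n) ≤ c2·n^a` for all `n ≥ N`. -/
theorem stmt_7 (n0 : ℕ) (hn0 : 1 ≤ n0) (a : ℝ) (ha : -(n0 : ℝ) < a)
    (f g : ℕ → ℝ)
    (hf : ∀ n, n0 ≤ n → 0 < f n) (hg : ∀ n, n0 ≤ n → 0 < g n)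
    (hrec : ∀ n, n0 ≤ n → f (n + 1) = (1 + a / n) * f n + g n / n)
    (ε : ℝ) (hε : 0 < ε)
    (hO : (fun n : ℕ => g n) =O[atTop] fun n : ℕ => (n : ℝ) ^ (a - ε)) :
    ∃ c1 c2 : ℝ, ∃ N : ℕ, 0 < c1 ∧ c1 ≤ c2 ∧
      ∀ n, N ≤ n → c1 * (n : ℝ) ^ a ≤ f n ∧ f n ≤ c2 * (n : ℝ) ^ a := by
  set T : ℕ → ℝ := fun k => g k / k / growthProd n0 a (k + 1)
  set L := f n0 + ∑' j, T (j + n0)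
  have hL : 0 < L := add_pos_of_pos_of_nonneg (hf n0 le_rfl) <| tsum_nonneg fun j =>
    div_nonneg (div_nonneg (hg _ (Nat.le_add_left n0 j)).le (Nat.cast_nonneg _))
      (growthProd_pos hn0 ha _).le
  have hS : (fun n => f n0 + ∑ k ∈ Ico n0 n, T k) ~[atTop] fun _ => L :=
    (isEquivalent_const_iff_tendsto hL.ne').2 <| tendsto_const_nhds.add <|
      tendsto_sum_Ico_tsum (summable_div_growthProd_succ hn0 ha hε hO) n0
  set c := Gamma n0 / Gamma (n0 + a) * L
  have hc : 0 < c :=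
    mul_pos (div_pos (Gamma_pos_of_pos (by positivity)) (Gamma_pos_of_pos (by linarith))) hL
  have hequiv : f ~[atTop] fun n => c * (n : ℝ) ^ a := by
    refine ((isEquivalent_growthProd hn0 ha).mul hS).congr_left ?_ |>.congr_right ?_
    · filter_upwards [eventually_ge_atTop n0] with n hn
      exact (eq_prod_mul_add_sum_of_rec (fun k hk => (one_add_div_pos hn0 ha hk).ne') hrec hn).symm
    · exact .of_eq (funext fun n => by simp only [Pi.mul_apply, c]; ring)
  obtain ⟨N, hN⟩ := eventually_atTop.1 <| hequiv.eventually_half_le_and_le_two <|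
    .of_forall fun n => by positivity
  refine ⟨c / 2, 2 * c, N, by positivity, by linarith, fun n hn => ?_⟩
  obtain ⟨hlow, hupp⟩ := hN n hn
  constructor <;> linarith
end

section
/- Let ε > 0. If g(n) = O(n^{a+ε}) as n → ∞, then f(n) = O(n^{a+ε}) as n → ∞; and if g(n) = Ω(n^{a+ε}) as n → ∞, then f(n) = Ω(n^{a+ε}) as n → ∞. -/
open Filter Asymptotics Topology

/-!
Since `n ((1 + 1/n)^s - 1) → s`, the power `h n = n^(a+ε)` satisfies
`h (n+1) = (1 + a/n) h n + δ_n h n / n` with `δ_n → ε`, so eventually `ε/2 ≤ δ_n ≤ 2ε`.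
Hence a large multiple of `n^(a+ε)` is a supersolution of the recursion of `f` when
`g ≤ c n^(a+ε)`, and a small multiple is a subsolution when `g ≥ c n^(a+ε)`. As `1 + a/n` is
eventually nonnegative, the recursion is monotone, and induction from a large index compares `f`
with these multiples.
-/

theorem le_of_le_of_recursion {u v p q : ℕ → ℝ} {N : ℕ} (hp : ∀ n ≥ N, 0 ≤ p n)
    (hu : ∀ n ≥ N, u (n + 1) ≤ p n * u n + q n)
    (hv : ∀ n ≥ N, p n * v n + q n ≤ v (n + 1))
    (hN : u N ≤ v N) : ∀ n ≥ N, u n ≤ v n := by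
  intro n hn
  induction n, hn using Nat.le_induction with
  | base => exact hN
  | succ n hn ih =>
    calc u (n + 1) ≤ p n * u n + q n := hu n hn
      _ ≤ p n * v n + q n := by gcongr; exact hp n hn
      _ ≤ v (n + 1) := hv n hn

theorem eventually_nonneg_one_add_div_natCast (a : ℝ) :
    ∀ᶠ n : ℕ in atTop, 0 ≤ 1 + a / n := by
  have h := (tendsto_const_div_atTop_nhds_zero_nat a).const_add 1
  rw [add_zero] at h
  exact (h.eventually (lt_mem_nhds one_pos)).mono fun _ hn => hn.le

theorem tendsto_natCast_mul_one_add_inv_rpow_sub_one (s : ℝ) :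
    Tendsto (fun n : ℕ => (n : ℝ) * ((1 + 1 / n) ^ s - 1)) atTop (𝓝 s) := by
  have hderiv : HasDerivAt (fun x : ℝ => x ^ s) s 1 := by
    simpa using Real.hasDerivAt_rpow_const (x := 1) (p := s) (Or.inl one_ne_zero)
  have hinv : Tendsto (fun n : ℕ => 1 + 1 / (n : ℝ)) atTop (𝓝[≠] 1) := by
    refine tendsto_nhdsWithin_iff.2 ⟨?_, ?_⟩
    · simpa using tendsto_one_div_atTop_nhds_zero_nat.const_add (1 : ℝ)
    · filter_upwards [eventually_ge_atTop 1] with n hn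
      have : (0 : ℝ) < 1 / n := by positivity
      simpa using this.ne'
  refine ((hasDerivAt_iff_tendsto_slope.1 hderiv).comp hinv).congr' ?_
  filter_upwards [eventually_ge_atTop 1] with n hn
  have : (0 : ℝ) < n := by exact_mod_cast hn
  simp only [Function.comp, slope_def_field, Real.one_rpow]
  field_simp
  ring

theorem eventually_rpow_succ_bounds (a : ℝ) {ε : ℝ} (hε : 0 < ε) :
    ∀ᶠ n : ℕ in atTop,
      (1 + a / n) * (n : ℝ) ^ (a + ε) + ε / 2 * ((n : ℝ) ^ (a + ε) / n)
          ≤ ((n : ℝ) + 1) ^ (a + ε) ∧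
      ((n : ℝ) + 1) ^ (a + ε)
          ≤ (1 + a / n) * (n : ℝ) ^ (a + ε) + 2 * ε * ((n : ℝ) ^ (a + ε) / n) := by
  have hlim :
      Tendsto (fun n : ℕ => (n : ℝ) * ((1 + 1 / n) ^ (a + ε) - 1) - a) atTop (𝓝 ε) := by
    simpa using (tendsto_natCast_mul_one_add_inv_rpow_sub_one (a + ε)).sub_const a
  filter_upwards [hlim.eventually (Ioo_mem_nhds (half_lt_self hε) (by linarith : ε < 2 * ε)),
    eventually_ge_atTop 1] with n ⟨hlo, hhi⟩ hn
  have hn : (0 : ℝ) < n := by exact_mod_cast hn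
  have hsucc : ((n : ℝ) + 1) ^ (a + ε) - (1 + a / n) * (n : ℝ) ^ (a + ε)
      = ((n : ℝ) * ((1 + 1 / n) ^ (a + ε) - 1) - a) * ((n : ℝ) ^ (a + ε) / n) := by
    rw [show (n : ℝ) + 1 = n * (1 + 1 / n) by field_simp, Real.mul_rpow hn.le (by positivity)]
    field_simp
    ring
  have hpos : 0 < (n : ℝ) ^ (a + ε) / n := by positivity
  constructor <;> nlinarith

theorem isBigO_rpow_of_recursion {a ε : ℝ} (hε : 0 < ε) {f g : ℕ → ℝ}
    (hf : ∀ᶠ n in atTop, 0 ≤ f n)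
    (hrec : ∀ᶠ n in atTop, f (n + 1) = (1 + a / n) * f n + g n / n)
    (hg : g =O[atTop] fun n : ℕ => (n : ℝ) ^ (a + ε)) :
    f =O[atTop] fun n : ℕ => (n : ℝ) ^ (a + ε) := by
  obtain ⟨c, hc, hgc⟩ := hg.exists_pos
  obtain ⟨N, hN⟩ := eventually_atTop.1 <| (eventually_nonneg_one_add_div_natCast a).and <|
    hrec.and <| hf.and <| hgc.bound.and <| (eventually_rpow_succ_bounds a hε).and <|
    eventually_gt_atTop 0
  set C := max (2 * c / ε) (f N / (N : ℝ) ^ (a + ε))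
  have hcC : c ≤ C * (ε / 2) := by
    calc c = 2 * c / ε * (ε / 2) := by field_simp
      _ ≤ C * (ε / 2) := by gcongr; exact le_max_left _ _
  have hfC : ∀ n ≥ N, f n ≤ C * (n : ℝ) ^ (a + ε) := by
    refine le_of_le_of_recursion (fun n hn => (hN n hn).1) (q := fun n => g n / n)
      (fun n hn => (hN n hn).2.1.le) (fun n hn => ?_) ?_
    · obtain ⟨-, -, -, hgn, ⟨hlo, -⟩, hn⟩ := hN n hn
      have hn : (0 : ℝ) < n := by exact_mod_cast hn
      rw [Real.norm_eq_abs, Real.norm_of_nonneg (by positivity)] at hgn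
      push_cast
      calc (1 + a / n) * (C * (n : ℝ) ^ (a + ε)) + g n / n
          ≤ (1 + a / n) * (C * (n : ℝ) ^ (a + ε))
              + C * (ε / 2) * ((n : ℝ) ^ (a + ε) / n) := by
            rw [← mul_div_assoc]
            gcongr
            exact (le_abs_self _).trans (hgn.trans (by gcongr))
        _ = C * ((1 + a / n) * (n : ℝ) ^ (a + ε) + ε / 2 * ((n : ℝ) ^ (a + ε) / n)) := by
            ring
        _ ≤ C * ((n : ℝ) + 1) ^ (a + ε) := by gcongr
    · have hN0 : (0 : ℝ) < N := by exact_mod_cast (hN N le_rfl).2.2.2.2.2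
      exact (div_le_iff₀ (by positivity)).1 (le_max_right _ _)
  refine IsBigO.of_bound C ?_
  filter_upwards [eventually_ge_atTop N] with n hn
  rw [Real.norm_of_nonneg (hN n hn).2.2.1, Real.norm_of_nonneg (by positivity)]
  exact hfC n hn

theorem exists_pos_mul_rpow_le_of_recursion {a ε : ℝ} (hε : 0 < ε) {f g : ℕ → ℝ}
    (hf : ∀ᶠ n in atTop, 0 < f n)
    (hrec : ∀ᶠ n in atTop, f (n + 1) = (1 + a / n) * f n + g n / n)
    {c : ℝ} (hc : 0 < c) (hg : ∀ᶠ n : ℕ in atTop, c * (n : ℝ) ^ (a + ε) ≤ g n) :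
    ∃ c' > 0, ∀ᶠ n : ℕ in atTop, c' * (n : ℝ) ^ (a + ε) ≤ f n := by
  obtain ⟨N, hN⟩ := eventually_atTop.1 <| (eventually_nonneg_one_add_div_natCast a).and <|
    hrec.and <| hf.and <| hg.and <| (eventually_rpow_succ_bounds a hε).and <|
    eventually_gt_atTop 0
  have hN0 : (0 : ℝ) < N := by exact_mod_cast (hN N le_rfl).2.2.2.2.2
  set c' := min (c / (2 * ε)) (f N / (N : ℝ) ^ (a + ε))
  have hc' : 0 < c' := lt_min (by positivity) (div_pos (hN N le_rfl).2.2.1 (by positivity))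
  have hc'c : c' * (2 * ε) ≤ c := by
    calc c' * (2 * ε) ≤ c / (2 * ε) * (2 * ε) := by gcongr; exact min_le_left _ _
      _ = c := by field_simp
  refine ⟨c', hc', eventually_atTop.2 ⟨N, ?_⟩⟩
  refine le_of_le_of_recursion (fun n hn => (hN n hn).1) (q := fun n => g n / n)
    (fun n hn => ?_) (fun n hn => (hN n hn).2.1.ge) ?_
  · obtain ⟨-, -, -, hgn, ⟨-, hhi⟩, hn⟩ := hN n hn
    have hn : (0 : ℝ) < n := by exact_mod_cast hn
    push_cast
    calc c' * ((n : ℝ) + 1) ^ (a + ε)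
        ≤ c' * ((1 + a / n) * (n : ℝ) ^ (a + ε) + 2 * ε * ((n : ℝ) ^ (a + ε) / n)) := by
          gcongr
      _ = (1 + a / n) * (c' * (n : ℝ) ^ (a + ε))
            + c' * (2 * ε) * ((n : ℝ) ^ (a + ε) / n) := by
            ring
      _ ≤ (1 + a / n) * (c' * (n : ℝ) ^ (a + ε)) + g n / n := by
            rw [← mul_div_assoc]
            gcongr
            exact le_trans (by gcongr) hgn
  · exact (le_div_iff₀ (by positivity)).1 (min_le_right _ _)

theorem stmt_9_general (n0 : ℕ) (a : ℝ)
    (f g : ℕ → ℝ)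
    (hf : ∀ n, n0 ≤ n → 0 < f n)
    (hrec : ∀ n, n0 ≤ n → f (n + 1) = (1 + a / n) * f n + g n / n)
    (ε : ℝ) (hε : 0 < ε) :
    ((fun n : ℕ => g n) =O[atTop] (fun n : ℕ => (n : ℝ) ^ (a + ε)) →
      (fun n : ℕ => f n) =O[atTop] fun n : ℕ => (n : ℝ) ^ (a + ε)) ∧
    ((∃ c : ℝ, 0 < c ∧ ∃ N : ℕ, ∀ n, N ≤ n → c * (n : ℝ) ^ (a + ε) ≤ g n) →
      ∃ c : ℝ, 0 < c ∧ ∃ N : ℕ, ∀ n, N ≤ n → c * (n : ℝ) ^ (a + ε) ≤ f n) := by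
  have hf' : ∀ᶠ n in atTop, 0 < f n := eventually_atTop.2 ⟨n0, hf⟩
  have hrec' : ∀ᶠ n in atTop, f (n + 1) = (1 + a / n) * f n + g n / n :=
    eventually_atTop.2 ⟨n0, hrec⟩
  refine ⟨isBigO_rpow_of_recursion hε (hf'.mono fun _ => le_of_lt) hrec', ?_⟩
  rintro ⟨c, hc, N, hg⟩
  obtain ⟨c', hc', hfc'⟩ :=
    exists_pos_mul_rpow_le_of_recursion hε hf' hrec' hc (eventually_atTop.2 ⟨N, hg⟩)
  exact ⟨c', hc', eventually_atTop.1 hfc'⟩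

/-- Let `ε > 0`. If `g(n) = O(n^{a+ε})` then `f(n) = O(n^{a+ε})`; and if
`g(n) = Ω(n^{a+ε})` then `f(n) = Ω(n^{a+ε})`. -/
theorem stmt_9 (n0 : ℕ) (hn0 : 1 ≤ n0) (a : ℝ) (ha : -(n0 : ℝ) < a)
    (f g : ℕ → ℝ)
    (hf : ∀ n, n0 ≤ n → 0 < f n) (hg : ∀ n, n0 ≤ n → 0 < g n)
    (hrec : ∀ n, n0 ≤ n → f (n + 1) = (1 + a / n) * f n + g n / n)
    (ε : ℝ) (hε : 0 < ε) :
    ((fun n : ℕ => g n) =O[atTop] (fun n : ℕ => (n : ℝ) ^ (a + ε)) →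
      (fun n : ℕ => f n) =O[atTop] fun n : ℕ => (n : ℝ) ^ (a + ε)) ∧
    ((∃ c : ℝ, 0 < c ∧ ∃ N : ℕ, ∀ n, N ≤ n → c * (n : ℝ) ^ (a + ε) ≤ g n) →
      ∃ c : ℝ, 0 < c ∧ ∃ N : ℕ, ∀ n, N ≤ n → c * (n : ℝ) ^ (a + ε) ≤ f n) :=
  stmt_9_general n0 a f g hf hrec ε hε
end

section
/- If b is a real number with g(n) = O(n^b) as n → ∞, then for every ε > 0 one has f(n) = o(n^{max(a,b)+ε}) as n → ∞. -/
open Filter Asymptotics Topology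

/-- If `g(n) = O(n^b)`, then for every `ε > 0`, `f(n) = o(n^{max(a,b)+ε})`. -/
theorem stmt_10 (n0 : ℕ) (hn0 : 1 ≤ n0) (a : ℝ) (ha : -(n0 : ℝ) < a)
    (f g : ℕ → ℝ)
    (hf : ∀ n, n0 ≤ n → 0 < f n) (hg : ∀ n, n0 ≤ n → 0 < g n)
    (hrec : ∀ n, n0 ≤ n → f (n + 1) = (1 + a / n) * f n + g n / n)
    (b : ℝ) (hO : (fun n : ℕ => g n) =O[atTop] fun n : ℕ => (n : ℝ) ^ b) :
    ∀ ε : ℝ, 0 < ε →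
      (fun n : ℕ => f n) =o[atTop] fun n : ℕ => (n : ℝ) ^ (max a b + ε) := by
  intro ε hε
  set D : ℝ := max a b + ε with hD
  set d : ℝ := max a b + ε / 2 with hdd
  set μ : ℝ := ε / 4 with hμdef
  have hμ : 0 < μ := by positivity
  -- bound on g
  obtain ⟨C, hC, hgC⟩ := hO.exists_pos
  rw [IsBigOWith, eventually_atTop] at hgC
  obtain ⟨N0, hN0⟩ := hgC
  -- slope limit : n * ((1+1/n)^d - 1) → d
  have hderiv : HasDerivAt (fun x : ℝ => x ^ d) d 1 := by
    have := Real.hasDerivAt_rpow_const (x := (1 : ℝ)) (p := d) (Or.inl one_ne_zero)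
    simpa using this
  have hslope := hasDerivAt_iff_tendsto_slope.mp hderiv
  have htend1 : Tendsto (fun n : ℕ => (1 : ℝ) + 1 / n) atTop (𝓝[≠] (1 : ℝ)) := by
    rw [tendsto_nhdsWithin_iff]
    constructor
    · have h0 : Tendsto (fun n : ℕ => (1 : ℝ) / n) atTop (𝓝 0) :=
        tendsto_one_div_atTop_nhds_zero_nat
      simpa using (tendsto_const_nhds (x := (1:ℝ)) (f := atTop)).add h0
    · filter_upwards [eventually_gt_atTop 0] with n hn
      have hn' : (0 : ℝ) < 1 / n := by positivity
      simp only [Set.mem_compl_iff, Set.mem_singleton_iff]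
      intro h
      nlinarith
  have htend : Tendsto (fun n : ℕ => (n : ℝ) * ((1 + 1 / n) ^ d - 1)) atTop (𝓝 d) := by
    have hcomp := hslope.comp htend1
    refine hcomp.congr ?_
    intro n
    simp only [Function.comp_apply, slope_def_field, Real.one_rpow]
    rw [add_sub_cancel_left, div_div_eq_mul_div, div_one]
    ring
  -- eventual inequality
  have hlt : a + μ < d := by
    have : a ≤ max a b := le_max_left a b
    rw [hdd, hμdef]; linarith
  have hev : ∀ᶠ n : ℕ in atTop, a + μ < (n : ℝ) * ((1 + 1 / n) ^ d - 1) :=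
    htend.eventually (eventually_gt_nhds hlt)
  rw [eventually_atTop] at hev
  obtain ⟨N1, hN1⟩ := hev
  set M : ℕ := max (max n0 N0) (max N1 1) with hM
  have hMn0 : n0 ≤ M := le_trans (le_max_left _ _) (le_max_left _ _)
  have hMN0 : N0 ≤ M := le_trans (le_max_right _ _) (le_max_left _ _)
  have hMN1 : N1 ≤ M := le_trans (le_max_left _ _) (le_max_right _ _)
  have hM1 : 1 ≤ M := le_trans (le_max_right _ _) (le_max_right _ _)
  have hMpos : (0 : ℝ) < (M : ℝ) := by exact_mod_cast Nat.lt_of_lt_of_le Nat.zero_lt_one hM1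
  set K : ℝ := max (C / μ) (f M / (M : ℝ) ^ d) with hK
  have hKpos : 0 < K := lt_of_lt_of_le (by positivity) (le_max_left _ _)
  have hKC : C ≤ K * μ := by
    have := le_max_left (C / μ) (f M / (M : ℝ) ^ d)
    rw [div_le_iff₀ hμ] at this
    exact this
  have hbd : b ≤ d := by
    have : b ≤ max a b := le_max_right a b
    rw [hdd]; linarith
  -- induction
  have key : ∀ m : ℕ, f (M + m) ≤ K * ((M + m : ℕ) : ℝ) ^ d := by
    intro m
    induction m with
    | zero =>
        have hMd : (0 : ℝ) < (M : ℝ) ^ d := Real.rpow_pos_of_pos hMpos d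
        have := le_max_right (C / μ) (f M / (M : ℝ) ^ d)
        rw [div_le_iff₀ hMd] at this
        simpa using this
    | succ m ih =>
        set n : ℕ := M + m with hn
        have hnM : M ≤ n := Nat.le_add_right M m
        have hnn0 : n0 ≤ n := le_trans hMn0 hnM
        have hn1 : (1 : ℝ) ≤ (n : ℝ) := by exact_mod_cast le_trans hM1 hnM
        have hnpos : (0 : ℝ) < (n : ℝ) := lt_of_lt_of_le one_pos hn1
        -- positivity of 1 + a/n
        have hpos1 : 0 ≤ 1 + a / n := by
          have h1 : -(n0 : ℝ) / n ≤ a / n := by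
            exact div_le_div_of_nonneg_right ha.le hnpos.le
          have h2 : (n0 : ℝ) ≤ (n : ℝ) := by exact_mod_cast hnn0
          have h3 : -(1 : ℝ) ≤ -(n0 : ℝ) / n := by
            rw [neg_div, neg_le_neg_iff, div_le_one hnpos]; exact h2
          linarith
        -- bound on g n
        have hgb : g n ≤ C * (n : ℝ) ^ b := by
          have := hN0 n (le_trans hMN0 hnM)
          have hgp := hg n hnn0
          have hnb : (0 : ℝ) < (n : ℝ) ^ b := Real.rpow_pos_of_pos hnpos b
          rw [Real.norm_eq_abs, Real.norm_eq_abs, abs_of_pos hgp, abs_of_pos hnb] at this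
          exact this
        -- slope bound
        have hsl : 1 + (a + μ) / n ≤ (1 + 1 / (n : ℝ)) ^ d := by
          have := hN1 n (le_trans hMN1 hnM)
          have h2 : (a + μ) / n ≤ (1 + 1 / (n : ℝ)) ^ d - 1 := by
            rw [div_le_iff₀ hnpos, mul_comm]
            exact this.le
          linarith
        have hnd : (0 : ℝ) < (n : ℝ) ^ d := Real.rpow_pos_of_pos hnpos d
        have hnbd : (n : ℝ) ^ b ≤ (n : ℝ) ^ d := Real.rpow_le_rpow_of_exponent_le hn1 hbd
        have hsplit : (((n + 1 : ℕ)) : ℝ) ^ d = (n : ℝ) ^ d * (1 + 1 / (n : ℝ)) ^ d := by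
          have h1 : ((n : ℝ) + 1) = (n : ℝ) * (1 + 1 / n) := by field_simp
          push_cast
          rw [h1, Real.mul_rpow hnpos.le (by positivity)]
        have hrecn := hrec n hnn0
        have e1 : (1 + a / n) * f n ≤ (1 + a / n) * (K * (n : ℝ) ^ d) :=
          mul_le_mul_of_nonneg_left (by simpa using ih) hpos1
        have e2 : g n / n ≤ (K * μ * (n : ℝ) ^ d) / n := by
          apply div_le_div_of_nonneg_right ?_ hnpos.le
          calc g n ≤ C * (n : ℝ) ^ b := hgb
            _ ≤ (K * μ) * (n : ℝ) ^ b := by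
                apply mul_le_mul_of_nonneg_right hKC (Real.rpow_pos_of_pos hnpos b).le
            _ ≤ (K * μ) * (n : ℝ) ^ d := by
                apply mul_le_mul_of_nonneg_left hnbd (by positivity)
        have e3 : (1 + a / n) * (K * (n : ℝ) ^ d) + (K * μ * (n : ℝ) ^ d) / n
            = K * (n : ℝ) ^ d * (1 + (a + μ) / n) := by
          field_simp
          ring
        have e4 : K * (n : ℝ) ^ d * (1 + (a + μ) / n)
            ≤ K * (n : ℝ) ^ d * (1 + 1 / (n : ℝ)) ^ d :=
          mul_le_mul_of_nonneg_left hsl (by positivity)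
        have hfinal : f (n + 1) ≤ K * (((n + 1 : ℕ)) : ℝ) ^ d := by
          rw [hrecn, hsplit]
          calc (1 + a / ↑n) * f n + g n / ↑n
              ≤ (1 + a / n) * (K * (n : ℝ) ^ d) + (K * μ * (n : ℝ) ^ d) / n :=
                add_le_add e1 e2
            _ = K * (n : ℝ) ^ d * (1 + (a + μ) / n) := e3
            _ ≤ K * (n : ℝ) ^ d * (1 + 1 / (n : ℝ)) ^ d := e4
            _ = K * ((n : ℝ) ^ d * (1 + 1 / (n : ℝ)) ^ d) := by ring
        exact hfinal
  -- conclude: f n ≤ K n^d eventually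
  have hbound : ∀ᶠ n : ℕ in atTop, f n ≤ K * (n : ℝ) ^ d := by
    rw [eventually_atTop]
    exact ⟨M, fun n hn => by
      obtain ⟨m, rfl⟩ := Nat.exists_eq_add_of_le hn
      exact key m⟩
  -- littleO via tendsto
  have hdD : d < D := by rw [hdd, hD]; linarith
  have hlim : Tendsto (fun n : ℕ => K * (n : ℝ) ^ (d - D)) atTop (𝓝 0) := by
    have h1 : Tendsto (fun x : ℝ => x ^ (-(D - d))) atTop (𝓝 0) :=
      tendsto_rpow_neg_atTop (by linarith)
    have h2 := h1.comp (tendsto_natCast_atTop_atTop (R := ℝ))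
    have h3 : (fun n : ℕ => ((n : ℝ)) ^ (-(D - d))) = fun n : ℕ => (n : ℝ) ^ (d - D) := by
      funext n; rw [neg_sub]
    rw [Function.comp_def, h3] at h2
    simpa using h2.const_mul K
  have hzero : Tendsto (fun n : ℕ => f n / (n : ℝ) ^ D) atTop (𝓝 0) := by
    apply squeeze_zero' ?_ ?_ hlim
    · filter_upwards [eventually_ge_atTop n0] with n hn
      have := hf n hn
      positivity
    · filter_upwards [hbound, eventually_ge_atTop 1] with n hfn hn1
      have hnpos : (0 : ℝ) < (n : ℝ) := by exact_mod_cast hn1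
      have hD0 : (0 : ℝ) < (n : ℝ) ^ D := Real.rpow_pos_of_pos hnpos D
      rw [div_le_iff₀ hD0, mul_assoc, ← Real.rpow_add hnpos]
      have : d - D + D = d := by ring
      rw [this]
      exact hfn
  rw [isLittleO_iff_tendsto']
  · exact hzero
  · filter_upwards [eventually_ge_atTop 1] with n hn h
    exfalso
    have hnpos : (0 : ℝ) < (n : ℝ) := by exact_mod_cast hn
    exact (Real.rpow_pos_of_pos hnpos D).ne' h
end

section
/- For every integer k ≥ 2, the expected number of k-cliques of the one-step partial duplication G' of G satisfies E[C_k(G')] = (1 + (k/n) · p^{k-1}) · C_k(G); explicitly, (1/n) · Σ_{v∈V} Σ_{S ⊆ N(v)} p^{|S|} (1-p)^{|N(v)|-|S|} · C_k(G_{v,S}) = (1 + (k/n) · p^{k-1}) · C_k(G). -/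
/-! The new vertex `v'` splits the `k`-cliques of `G_{v,S}` into those avoiding it, which are the
`k`-cliques of `G`, and those containing it, which correspond to the `(k-1)`-cliques of `G` inside
`S`. A fixed `(k-1)`-clique `T ⊆ N(v)` lies in the random set `S` with probability `p^{k-1}`, and
`(v, T) ↦ insert v T` shows that summing the number of such `T` over all `v` counts every
`k`-clique of `G` once for each of its `k` vertices. -/

open Finset

/-- The graph `G_{v,S}` obtained from `G` by adding one new vertex (`none`) adjacent
exactly to the vertices of `S`. -/
def SimpleGraph.extendVertex {V : Type*} (G : SimpleGraph V) (S : Finset V) :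
    SimpleGraph (Option V) where
  Adj x y :=
    match x, y with
    | some u, some w => G.Adj u w
    | some u, none => u ∈ S
    | none, some w => w ∈ S
    | none, none => False
  symm := ⟨by
    rintro (_ | u) (_ | w) h
    · exact h
    · exact h
    · exact h
    · exact G.symm.symm _ _ h⟩
  loopless := ⟨by
    rintro (_ | u) h
    · exact h
    · exact G.loopless.irrefl u h⟩

instance {V : Type*} [DecidableEq V] (G : SimpleGraph V) [DecidableRel G.Adj] (S : Finset V) :
    DecidableRel (G.extendVertex S).Adj := fun x y =>
  match x, y with
  | some u, some w => inferInstanceAs (Decidable (G.Adj u w))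
  | some u, none => inferInstanceAs (Decidable (u ∈ S))
  | none, some w => inferInstanceAs (Decidable (w ∈ S))
  | none, none => inferInstanceAs (Decidable False)

namespace Finset

variable {ι R : Type*} [DecidableEq ι] [CommSemiring R]

theorem sum_supersets_pow_mul_eq_pow_mul_add_pow (a b : R) {s t : Finset ι} (hts : t ⊆ s) :
    ∑ u ∈ s.powerset with t ⊆ u, a ^ #u * b ^ (#s - #u) = a ^ #t * (a + b) ^ (#s - #t) := by
  have hIcc : {u ∈ s.powerset | t ⊆ u} = (s \ t).powerset.image (t ∪ ·) := by
    rw [← Icc_eq_image_powerset hts]; ext u; simp [and_comm]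
  rw [hIcc, sum_image, ← card_sdiff_of_subset hts, ← sum_pow_mul_eq_add_pow, mul_sum]
  · refine sum_congr rfl fun u hu => ?_
    have hdisj : Disjoint t u := disjoint_of_subset_right (mem_powerset.1 hu) disjoint_sdiff
    rw [card_union_of_disjoint hdisj, pow_add, mul_assoc, card_sdiff_of_subset hts]
    congr 3; omega
  · intro u hu w hw huw
    have hu' := disjoint_of_subset_left (mem_powerset.1 (mem_coe.1 hu)) sdiff_disjoint
    have hw' := disjoint_of_subset_left (mem_powerset.1 (mem_coe.1 hw)) sdiff_disjoint
    simpa [union_sdiff_left, hu'.sdiff_eq_left, hw'.sdiff_eq_left] using congrArg (· \ t) huw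

end Finset

namespace SimpleGraph

variable {V : Type*} (G : SimpleGraph V)

theorem isClique_extendVertex_iff (S : Finset V) {K : Finset (Option V)} :
    (G.extendVertex S).IsClique (K : Set (Option V)) ↔
      G.IsClique (K.eraseNone : Set V) ∧ (none ∈ K → K.eraseNone ⊆ S) := by
  constructor
  · intro h
    refine ⟨fun u hu w hw huw => ?_, fun hK u hu => ?_⟩
    · rw [Finset.mem_coe, Finset.mem_eraseNone] at hu hw
      exact h hu hw ((Option.some_injective V).ne huw)
    · rw [Finset.mem_eraseNone] at hu
      exact h hu hK (Option.some_ne_none u)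
  · rintro ⟨hG, hS⟩ (_ | u) hx (_ | w) hy hxy
    · exact absurd rfl hxy
    · exact hS hx (Finset.mem_eraseNone.2 hy)
    · exact hS hy (Finset.mem_eraseNone.2 hx)
    · exact hG (Finset.mem_eraseNone.2 hx) (Finset.mem_eraseNone.2 hy) fun h => hxy (by rw [h])

variable [Fintype V] [DecidableEq V] [DecidableRel G.Adj]

theorem card_cliqueFinset_extendVertex (S : Finset V) (k : ℕ) :
    #((G.extendVertex S).cliqueFinset (k + 1)) =
      #(G.cliqueFinset (k + 1)) + #{T ∈ G.cliqueFinset k | T ⊆ S} := by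
  rw [← card_filter_add_card_filter_not (p := fun K => none ∉ K)]
  congr 1
  · refine card_nbij' eraseNone (map .some) (fun K hK => ?_) (fun T hT => ?_)
      (fun K hK => ?_) (fun T _ => eraseNone_map_some T)
    · obtain ⟨hK, hnone⟩ := mem_filter.1 hK
      have hK := mem_cliqueFinset_iff.1 hK
      exact mem_cliqueFinset_iff.2 ⟨((G.isClique_extendVertex_iff S).1 hK.isClique).1,
        by rw [card_eraseNone_of_not_mem hnone, hK.card_eq]⟩
    · have hT := mem_cliqueFinset_iff.1 hT
      refine mem_filter.2 ⟨mem_cliqueFinset_iff.2 ⟨(G.isClique_extendVertex_iff S).2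
        ⟨by rw [eraseNone_map_some]; exact hT.isClique, by simp⟩,
        by rw [card_map, hT.card_eq]⟩, by simp⟩
    · rw [map_some_eraseNone, erase_eq_of_notMem (mem_filter.1 hK).2]
  · refine card_nbij' eraseNone insertNone (fun K hK => ?_) (fun T hT => ?_)
      (fun K hK => ?_) (fun T _ => eraseNone_insertNone T)
    · obtain ⟨hK, hnone⟩ := mem_filter.1 hK
      have hK := mem_cliqueFinset_iff.1 hK
      obtain ⟨hG, hS⟩ := (G.isClique_extendVertex_iff S).1 hK.isClique
      refine mem_filter.2 ⟨mem_cliqueFinset_iff.2 ⟨hG, ?_⟩, hS (not_not.1 hnone)⟩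
      rw [card_eraseNone_of_mem (not_not.1 hnone), hK.card_eq, Nat.add_sub_cancel]
    · obtain ⟨hT, hTS⟩ := mem_filter.1 hT
      have hT := mem_cliqueFinset_iff.1 hT
      refine mem_filter.2 ⟨mem_cliqueFinset_iff.2 ⟨(G.isClique_extendVertex_iff S).2
        ⟨by rw [eraseNone_insertNone]; exact hT.isClique,
          fun _ => by rwa [eraseNone_insertNone]⟩,
        by rw [card_insertNone, hT.card_eq]⟩, not_not.2 none_mem_insertNone⟩
    · rw [insertNone_eraseNone, insert_eq_of_mem (not_not.1 (mem_filter.1 hK).2)]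

theorem card_cliqueFinset_subset_neighborFinset (v : V) (k : ℕ) :
    #{T ∈ G.cliqueFinset k | T ⊆ G.neighborFinset v} =
      #{K ∈ G.cliqueFinset (k + 1) | v ∈ K} := by
  refine card_nbij' (insert v) (fun K => K.erase v) (fun T hT => ?_) (fun K hK => ?_)
    (fun T hT => ?_) (fun K hK => insert_erase (mem_filter.1 hK).2)
  · obtain ⟨hT, hTN⟩ := mem_filter.1 hT
    exact mem_filter.2 ⟨mem_cliqueFinset_iff.2 <| (mem_cliqueFinset_iff.1 hT).insert
      fun w hw => (G.mem_neighborFinset v w).1 (hTN hw), mem_insert_self v T⟩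
  · obtain ⟨hK, hv⟩ := mem_filter.1 hK
    have hK := mem_cliqueFinset_iff.1 hK
    refine mem_filter.2 ⟨mem_cliqueFinset_iff.2 (hK.erase_of_mem hv), fun w hw => ?_⟩
    exact (G.mem_neighborFinset v w).2
      (hK.isClique hv (mem_of_mem_erase hw) (ne_of_mem_erase hw).symm)
  · exact erase_insert fun hv => G.notMem_neighborFinset_self v ((mem_filter.1 hT).2 hv)

theorem sum_card_cliqueFinset_subset_neighborFinset (k : ℕ) :
    ∑ v, #{T ∈ G.cliqueFinset k | T ⊆ G.neighborFinset v} =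
      (k + 1) * #(G.cliqueFinset (k + 1)) := by
  calc ∑ v, #{T ∈ G.cliqueFinset k | T ⊆ G.neighborFinset v}
      = ∑ v, #{K ∈ G.cliqueFinset (k + 1) | v ∈ K} := by
        simp_rw [card_cliqueFinset_subset_neighborFinset]
    _ = ∑ K ∈ G.cliqueFinset (k + 1), #K := by
        simpa [bipartiteAbove, bipartiteBelow] using
          sum_card_bipartiteAbove_eq_sum_card_bipartiteBelow (s := univ)
            (t := G.cliqueFinset (k + 1)) (r := fun v K => v ∈ K)
    _ = (k + 1) * #(G.cliqueFinset (k + 1)) := by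
        rw [sum_const_nat fun K hK => (mem_cliqueFinset_iff.1 hK).card_eq, mul_comm]

theorem sum_powerset_mul_card_cliqueFinset_extendVertex {R : Type*} [CommRing R]
    (A : Finset V) (p : R) (k : ℕ) :
    ∑ S ∈ A.powerset, p ^ #S * (1 - p) ^ (#A - #S) *
        (#((G.extendVertex S).cliqueFinset (k + 1)) : R) =
      #(G.cliqueFinset (k + 1)) + p ^ k * #{T ∈ G.cliqueFinset k | T ⊆ A} := by
  have hsupersets (T : Finset V) (hT : T ∈ G.cliqueFinset k) :
      ∑ S ∈ A.powerset with T ⊆ S, p ^ #S * (1 - p) ^ (#A - #S) =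
        if T ⊆ A then p ^ k else 0 := by
    split_ifs with hTA
    · rw [sum_supersets_pow_mul_eq_pow_mul_add_pow _ _ hTA, add_sub_cancel, one_pow, mul_one,
        (mem_cliqueFinset_iff.1 hT).card_eq]
    · refine sum_eq_zero fun S hS => absurd ?_ hTA
      obtain ⟨hSA, hTS⟩ := mem_filter.1 hS
      exact hTS.trans (mem_powerset.1 hSA)
  calc _ = ∑ S ∈ A.powerset, p ^ #S * (1 - p) ^ (#A - #S) * (#(G.cliqueFinset (k + 1)) : R) +
        ∑ S ∈ A.powerset, ∑ T ∈ G.cliqueFinset k,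
          if T ⊆ S then p ^ #S * (1 - p) ^ (#A - #S) else 0 := by
        rw [← sum_add_distrib]
        refine sum_congr rfl fun S _ => ?_
        rw [card_cliqueFinset_extendVertex, card_filter]
        push_cast
        rw [mul_add, mul_sum]
        simp only [mul_ite, mul_one, mul_zero]
    _ = #(G.cliqueFinset (k + 1)) + ∑ T ∈ G.cliqueFinset k,
          ∑ S ∈ A.powerset with T ⊆ S, p ^ #S * (1 - p) ^ (#A - #S) := by
        rw [← sum_mul, sum_pow_mul_eq_add_pow, add_sub_cancel, one_pow, one_mul, sum_comm]
        simp_rw [sum_filter]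
    _ = _ := by
        rw [sum_congr rfl hsupersets, ← sum_filter, sum_const, nsmul_eq_mul, mul_comm]

end SimpleGraph

theorem stmt_11_general {V : Type*} [Fintype V] [DecidableEq V]
    (G : SimpleGraph V) [DecidableRel G.Adj]
    (hV : 1 ≤ Fintype.card V) (p : ℝ)
    (k : ℕ) (hk : 2 ≤ k) :
    (1 / (Fintype.card V : ℝ)) *
      ∑ v : V, ∑ S ∈ (G.neighborFinset v).powerset,
        p ^ S.card * (1 - p) ^ (G.degree v - S.card) *
          (((G.extendVertex S).cliqueFinset k).card : ℝ)
      = (1 + (k : ℝ) / (Fintype.card V : ℝ) * p ^ (k - 1)) *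
          ((G.cliqueFinset k).card : ℝ) := by
  obtain ⟨k, rfl⟩ : ∃ m, k = m + 1 := ⟨k - 1, by omega⟩
  simp_rw [← G.card_neighborFinset_eq_degree, G.sum_powerset_mul_card_cliqueFinset_extendVertex,
    sum_add_distrib, ← mul_sum, ← Nat.cast_sum, G.sum_card_cliqueFinset_subset_neighborFinset,
    sum_const, card_univ, nsmul_eq_mul]
  have hn : (Fintype.card V : ℝ) ≠ 0 := Nat.cast_ne_zero.2 (by omega)
  push_cast
  field_simp

/-- For `k ≥ 2`, the expected number of `k`-cliques of the one-step partial duplication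
of `G` equals `(1 + (k/n)·p^{k-1}) · C_k(G)`. -/
theorem stmt_11 {V : Type*} [Fintype V] [DecidableEq V]
    (G : SimpleGraph V) [DecidableRel G.Adj]
    (hV : 1 ≤ Fintype.card V) (p : ℝ) (hp0 : 0 ≤ p) (hp1 : p ≤ 1)
    (k : ℕ) (hk : 2 ≤ k) :
    (1 / (Fintype.card V : ℝ)) *
      ∑ v : V, ∑ S ∈ (G.neighborFinset v).powerset,
        p ^ S.card * (1 - p) ^ (G.degree v - S.card) *
          (((G.extendVertex S).cliqueFinset k).card : ℝ)
      = (1 + (k : ℝ) / (Fintype.card V : ℝ) * p ^ (k - 1)) *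
          ((G.cliqueFinset k).card : ℝ) :=
  stmt_11_general G hV p k hk
end

section
/- For all n ≥ n0, s2(n) = (s2(n0) + (2/p)·s1(n0)) · ∏_{k=n0}^{n-1} (k + 2p + p²)/k − (2/p)·s1(n0) · ∏_{k=n0}^{n-1} (k + 2p)/k. Consequently, s2(n) is asymptotically equivalent, as n → ∞, to (s2(n0) + (2/p)·s1(n0)) · (Γ(n0)/Γ(n0 + 2p + p²)) · n^{2p+p²}, provided s2(n0) + (2/p)·s1(n0) > 0. -/
/-!
`s1` solves a homogeneous first-order recurrence, and the weight `2 / p` is chosen so that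
`s2 + (2 / p) s1` solves the homogeneous recurrence `t (n + 1) = (1 + (2p + p²) / n) t n`; both
are therefore products, and `s2` is their difference. Euler's limit formula for `Γ` gives
`∏_{k=n0}^{n-1} (k + a) / k ~ Γ(n0) / Γ(n0 + a) · n^a`, so the product with exponent `2p` is
negligible against the one with exponent `2p + p²`.
-/

open Filter Topology Finset

theorem eq_mul_prod_Ico_of_succ_eq_mul {M : Type*} [CommMonoid M] {u c : ℕ → M} {m : ℕ}
    (h : ∀ n, m ≤ n → u (n + 1) = c n * u n) :
    ∀ n, m ≤ n → u n = u m * ∏ k ∈ Ico m n, c k := by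
  refine Nat.le_induction (by simp) fun n hn ih => ?_
  rw [h n hn, ih, prod_Ico_succ_top hn, mul_comm (c n), mul_assoc]

theorem prod_Ico_add_div_eq_GammaSeq_div_mul_rpow {a : ℝ} {m : ℕ} (hm : 0 < m) (ha : 0 < m + a)
    {n : ℕ} (hn : 0 < n) :
    ∏ k ∈ Ico m (m + (n + 1)), (((k : ℝ) + a) / k) =
      Real.GammaSeq m n / Real.GammaSeq (m + a) n * (n : ℝ) ^ a := by
  have hnr : (0 : ℝ) < n := by exact_mod_cast hn
  rw [prod_Ico_eq_prod_range, Nat.add_sub_cancel_left, prod_div_distrib, Real.GammaSeq,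
    Real.GammaSeq, Real.rpow_add hnr]
  have : ∏ j ∈ range (n + 1), ((m : ℝ) + j) ≠ 0 := by positivity
  have : ∏ j ∈ range (n + 1), ((m : ℝ) + a + j) ≠ 0 := by positivity
  have : (0 : ℝ) < n ^ (m : ℝ) := by positivity
  have : (0 : ℝ) < n ^ a := by positivity
  field_simp
  push_cast
  simp only [add_right_comm _ a, mul_comm]

theorem tendsto_prod_Ico_add_div_div_rpow {a : ℝ} {m : ℕ} (hm : 0 < m) (ha : 0 < m + a) :
    Tendsto (fun n : ℕ => (∏ k ∈ Ico m n, (((k : ℝ) + a) / k)) / (n : ℝ) ^ a) atTop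
      (𝓝 (Real.Gamma m / Real.Gamma (m + a))) := by
  rw [← tendsto_add_atTop_iff_nat (m + 1)]
  have hratio : Tendsto (fun n : ℕ => ((n : ℝ) / (n + (m + 1 : ℕ))) ^ a) atTop (𝓝 1) := by
    simpa using
      (tendsto_natCast_div_add_atTop ((m + 1 : ℕ) : ℝ)).rpow_const (p := a) (Or.inl one_ne_zero)
  have hGamma := ((Real.GammaSeq_tendsto_Gamma m).div (Real.GammaSeq_tendsto_Gamma (m + a))
    (Real.Gamma_pos_of_pos ha).ne').mul hratio
  rw [mul_one] at hGamma
  refine hGamma.congr' ((eventually_gt_atTop 0).mono fun n hn => ?_)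
  have hnr : (0 : ℝ) < n := by exact_mod_cast hn
  have hN : (0 : ℝ) < n + (m + 1 : ℕ) := by positivity
  have : (0 : ℝ) < n ^ a := by positivity
  have : (0 : ℝ) < (n + (m + 1 : ℕ) : ℝ) ^ a := by positivity
  simp only [Pi.div_apply]
  rw [show n + (m + 1) = m + (n + 1) by ring, prod_Ico_add_div_eq_GammaSeq_div_mul_rpow hm ha hn,
    Real.div_rpow hnr.le hN.le, show ((m + (n + 1) : ℕ) : ℝ) = n + (m + 1 : ℕ) by push_cast; ring]
  field_simp

theorem tendsto_sub_div_mul_rpow_of_lt {f g : ℕ → ℝ} {a b α β : ℝ}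
    (hf : Tendsto (fun n : ℕ => f n / (n : ℝ) ^ a) atTop (𝓝 α))
    (hg : Tendsto (fun n : ℕ => g n / (n : ℝ) ^ b) atTop (𝓝 β)) (hba : b < a) (hα : α ≠ 0) :
    Tendsto (fun n : ℕ => (f n - g n) / (α * (n : ℝ) ^ a)) atTop (𝓝 1) := by
  have hpow : Tendsto (fun n : ℕ => (n : ℝ) ^ (b - a)) atTop (𝓝 0) := by
    rw [← neg_sub]
    exact (tendsto_rpow_neg_atTop (sub_pos.mpr hba)).comp tendsto_natCast_atTop_atTop
  have hlim := (hf.div_const α).sub ((hg.mul hpow).div_const α)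
  rw [div_self hα, mul_zero, zero_div, sub_zero] at hlim
  refine hlim.congr' ((eventually_gt_atTop 0).mono fun n hn => ?_)
  have hnr : (0 : ℝ) < n := by exact_mod_cast hn
  rw [Real.rpow_sub hnr]
  have : (0 : ℝ) < n ^ a := by positivity
  have : (0 : ℝ) < n ^ b := by positivity
  field_simp

theorem stmt_15_general (p : ℝ) (hp0 : 0 < p) (n0 : ℕ) (hn0 : 1 ≤ n0)
    (s1 s2 : ℕ → ℝ)
    (hrec1 : ∀ n, n0 ≤ n → s1 (n + 1) = (1 + 2 * p / n) * s1 n)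
    (hrec2 : ∀ n, n0 ≤ n →
      s2 (n + 1) = (1 + (2 * p + p ^ 2) / n) * s2 n + (2 * p / n) * s1 n) :
    (∀ n, n0 ≤ n →
      s2 n = (s2 n0 + 2 / p * s1 n0) * ∏ k ∈ Finset.Ico n0 n, (((k : ℝ) + 2 * p + p ^ 2) / k)
        - 2 / p * s1 n0 * ∏ k ∈ Finset.Ico n0 n, (((k : ℝ) + 2 * p) / k)) ∧
    (0 < s2 n0 + 2 / p * s1 n0 →
      Tendsto (fun n : ℕ => s2 n /
          ((s2 n0 + 2 / p * s1 n0) *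
            (Real.Gamma (n0 : ℝ) / Real.Gamma ((n0 : ℝ) + 2 * p + p ^ 2)) *
            (n : ℝ) ^ (2 * p + p ^ 2)))
        atTop (nhds 1)) := by
  have hn : ∀ n, n0 ≤ n → (n : ℝ) ≠ 0 := fun n hn => Nat.cast_ne_zero.mpr (by omega)
  have hs1 := eq_mul_prod_Ico_of_succ_eq_mul (u := s1) (c := fun k => ((k : ℝ) + 2 * p) / k)
    fun n hn' => by rw [hrec1 n hn', one_add_div (hn n hn')]
  have ht := eq_mul_prod_Ico_of_succ_eq_mul (u := fun n => s2 n + 2 / p * s1 n)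
    (c := fun k => ((k : ℝ) + 2 * p + p ^ 2) / k) fun n hn' => by
      rw [hrec1 n hn', hrec2 n hn']
      field_simp [hn n hn']
      ring
  have closed_form : ∀ n, n0 ≤ n → s2 n = (s2 n0 + 2 / p * s1 n0) *
      ∏ k ∈ Ico n0 n, (((k : ℝ) + 2 * p + p ^ 2) / k)
        - 2 / p * s1 n0 * ∏ k ∈ Ico n0 n, (((k : ℝ) + 2 * p) / k) := fun n hn' => by
    linear_combination ht n hn' - 2 / p * hs1 n hn'
  refine ⟨closed_form, fun hC => ?_⟩
  have hA := tendsto_prod_Ico_add_div_div_rpow (a := 2 * p + p ^ 2) hn0 (by positivity)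
  have hB := tendsto_prod_Ico_add_div_div_rpow (a := 2 * p) hn0 (by positivity)
  simp only [← add_assoc] at hA
  have hf := hA.const_mul (s2 n0 + 2 / p * s1 n0)
  have hg := hB.const_mul (2 / p * s1 n0)
  simp only [← mul_div_assoc] at hf hg
  refine (tendsto_sub_div_mul_rpow_of_lt hf hg (lt_add_of_pos_right _ (by positivity))
    (by positivity)).congr' ?_
  filter_upwards [eventually_ge_atTop n0] with n hn'
  rw [closed_form n hn', ← mul_div_assoc]

/-- For all `n ≥ n0`,
`s2(n) = (s2(n0) + (2/p)s1(n0))·∏_{k=n0}^{n-1}(k+2p+p²)/k − (2/p)s1(n0)·∏_{k=n0}^{n-1}(k+2p)/k`,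
and consequently (provided `s2(n0) + (2/p)s1(n0) > 0`) `s2(n)` is asymptotically equivalent to
`(s2(n0) + (2/p)s1(n0)) · (Γ(n0)/Γ(n0+2p+p²)) · n^{2p+p²}`. -/
theorem stmt_15 (p : ℝ) (hp0 : 0 < p) (hp1 : p ≤ 1) (n0 : ℕ) (hn0 : 1 ≤ n0)
    (s1 s2 : ℕ → ℝ)
    (h1nn : ∀ n, n0 ≤ n → 0 ≤ s1 n) (h2nn : ∀ n, n0 ≤ n → 0 ≤ s2 n)
    (hrec1 : ∀ n, n0 ≤ n → s1 (n + 1) = (1 + 2 * p / n) * s1 n)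
    (hrec2 : ∀ n, n0 ≤ n →
      s2 (n + 1) = (1 + (2 * p + p ^ 2) / n) * s2 n + (2 * p / n) * s1 n) :
    (∀ n, n0 ≤ n →
      s2 n = (s2 n0 + 2 / p * s1 n0) * ∏ k ∈ Finset.Ico n0 n, (((k : ℝ) + 2 * p + p ^ 2) / k)
        - 2 / p * s1 n0 * ∏ k ∈ Finset.Ico n0 n, (((k : ℝ) + 2 * p) / k)) ∧
    (0 < s2 n0 + 2 / p * s1 n0 →
      Tendsto (fun n : ℕ => s2 n /
          ((s2 n0 + 2 / p * s1 n0) *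
            (Real.Gamma (n0 : ℝ) / Real.Gamma ((n0 : ℝ) + 2 * p + p ^ 2)) *
            (n : ℝ) ^ (2 * p + p ^ 2)))
        atTop (nhds 1)) :=
  stmt_15_general p hp0 n0 hn0 s1 s2 hrec1 hrec2
end

section
/- For every integer n ≥ n0 and every integer ℓ ≥ a, the distribution of D_n is given by P(D_n = ℓ) = Σ_{m=a}^{ℓ} (−1)^{m−a} · binom(ℓ−1, m−1) · binom(m−1, a−1) · ∏_{j=n0}^{n−1} (1 − p·m/j), where the empty product (n = n0) is 1. -/
/-!
Write `u_n(ℓ) = P(D_n = ℓ)`. Conditioning the jump indicator on `F_n` over the events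
`{D_n = k}` gives the forward equation
`u_{n+1}(ℓ + 1) = (1 - p(ℓ + 1)/n) u_n(ℓ + 1) + (pℓ/n) u_n(ℓ)`.
Let `L_π(ℓ) = Σ_m (-1)^(m-a) C(ℓ-1, m-1) C(m-1, a-1) π(m)` for weights `π`. By the identity
`ℓ C(ℓ-1, m-1) = C(ℓ, m-1) (ℓ + 1 - m)`, multiplying the weights by `1 - rm` turns `L_π` into a
solution of the same recurrence with `r = p/n`. At `n = n0` all weights are `1`, and then the
sum collapses to the indicator of `ℓ = a` by the alternating binomial sum. So by induction on
`n`, `u_n = L_π` with `π(m) = ∏_{j ∈ [n0, n)} (1 - pm/j)`.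
-/

open MeasureTheory Filter Finset

noncomputable def degreeLaw (a : ℕ) (π : ℕ → ℝ) (ℓ : ℕ) : ℝ :=
  ∑ m ∈ Icc a ℓ, (-1 : ℝ) ^ (m - a) * ((ℓ - 1).choose (m - 1) : ℝ) *
    ((m - 1).choose (a - 1) : ℝ) * π m

theorem degreeLaw_one {a : ℕ} (ha : 1 ≤ a) (ℓ : ℕ) :
    degreeLaw a 1 ℓ = if ℓ = a then 1 else 0 := by
  rcases lt_or_ge ℓ a with hℓ | hℓ
  · simp [degreeLaw, Icc_eq_empty_of_lt hℓ, hℓ.ne]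
  obtain ⟨d, rfl⟩ := Nat.exists_eq_add_of_le hℓ
  have hterm : ∀ i ∈ range (d + 1),
      (-1 : ℝ) ^ (a + i - a) * ((a + d - 1).choose (a + i - 1) : ℝ) *
        ((a + i - 1).choose (a - 1) : ℝ) * 1
        = ((a + d - 1).choose (a - 1) : ℝ) * ((-1 : ℝ) ^ i * (d.choose i : ℝ)) := by
    intro i _
    have hc := Nat.choose_mul (n := a + d - 1) (k := a + i - 1) (s := a - 1) (by omega)
    rw [show a + d - 1 - (a - 1) = d by omega, show a + i - 1 - (a - 1) = i by omega] at hc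
    rw [Nat.add_sub_cancel_left, mul_one, mul_assoc, ← Nat.cast_mul, hc]
    push_cast
    ring
  have halt : ∑ i ∈ range (d + 1), (-1 : ℝ) ^ i * (d.choose i : ℝ) = if d = 0 then 1 else 0 := by
    exact_mod_cast Int.alternating_sum_range_choose (n := d)
  rw [degreeLaw, ← Ico_add_one_right_eq_Icc, sum_Ico_eq_sum_range,
    show a + d + 1 - a = d + 1 by omega]
  simp only [Pi.one_apply]
  rw [sum_congr rfl hterm, ← mul_sum, halt]
  rcases d with _ | d <;> simp

theorem degreeLaw_mul_succ {a : ℕ} (ha : 1 ≤ a) (π : ℕ → ℝ) (r : ℝ) (ℓ : ℕ) :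
    degreeLaw a (fun m => π m * (1 - r * m)) (ℓ + 1)
      = (1 - r * (ℓ + 1)) * degreeLaw a π (ℓ + 1) + r * ℓ * degreeLaw a π ℓ := by
  have hshift : ℓ * degreeLaw a π ℓ = ∑ m ∈ Icc a (ℓ + 1), (-1 : ℝ) ^ (m - a) *
      (ℓ.choose (m - 1) : ℝ) * ((m - 1).choose (a - 1) : ℝ) * π m * ((ℓ : ℝ) + 1 - m) := by
    rw [degreeLaw, mul_sum, ← sum_subset (Icc_subset_Icc_right ℓ.le_succ)]
    · refine sum_congr rfl fun m hm => ?_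
      rw [mem_Icc] at hm
      obtain ⟨k, rfl⟩ : ∃ k, m = k + 1 := ⟨m - 1, by omega⟩
      obtain ⟨j, rfl⟩ : ∃ j, ℓ = j + 1 := ⟨ℓ - 1, by omega⟩
      have hc := congrArg (Nat.cast : ℕ → ℝ) (Nat.choose_mul_succ_eq j k)
      push_cast [Nat.cast_sub (show k ≤ j + 1 by omega)] at hc
      simp only [Nat.add_sub_cancel]
      push_cast
      linear_combination ((-1 : ℝ) ^ (k + 1 - a) * ((k.choose (a - 1) : ℕ) : ℝ) * π (k + 1)) * hc
    · intro m _ hm'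
      have : m = ℓ + 1 := by simp only [mem_Icc] at *; omega
      subst this
      push_cast
      ring
  simp only [degreeLaw, Nat.add_sub_cancel] at hshift ⊢
  rw [mul_assoc r, hshift, mul_sum, mul_sum, ← sum_add_distrib]
  refine sum_congr rfl fun m _ => ?_
  ring

section

variable {Ω : Type*} {m0 : MeasurableSpace Ω} {μ : Measure Ω}

theorem measureReal_eq_of_ae_eq_const [IsProbabilityMeasure μ] {X : Ω → ℕ} {a : ℕ}
    (hX : ∀ᵐ ω ∂μ, X ω = a) (ℓ : ℕ) :
    μ.real {ω | X ω = ℓ} = if ℓ = a then 1 else 0 := by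
  have hlevel : {ω | X ω = ℓ} =ᵐ[μ] ({_ω | a = ℓ} : Set Ω) := by
    rw [eventuallyEq_set]
    filter_upwards [hX] with ω hω
    simp [hω]
  rw [measureReal_congr hlevel]
  by_cases h : ℓ = a <;> simp [h, Ne.symm]

variable [IsFiniteMeasure μ]

theorem measureReal_inter_eq_setIntegral_of_condExp {m : MeasurableSpace Ω} (hm : m ≤ m0)
    {P : Ω → Prop} [DecidablePred P] (hP : MeasurableSet[m0] {ω | P ω}) {g : Ω → ℝ}
    (hg : μ[fun ω => if P ω then (1 : ℝ) else 0 | m] =ᵐ[μ] g) {s : Set Ω}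
    (hs : MeasurableSet[m] s) :
    μ.real (s ∩ {ω | P ω}) = ∫ ω in s, g ω ∂μ := by
  have hind : (fun ω => if P ω then (1 : ℝ) else 0) = {ω | P ω}.indicator 1 := by
    ext ω
    simp [Set.indicator_apply]
  have hint : Integrable (fun ω => if P ω then (1 : ℝ) else 0) μ := by
    rw [hind]
    exact (integrable_const 1).indicator hP
  calc μ.real (s ∩ {ω | P ω}) = ∫ ω in s, (if P ω then (1 : ℝ) else 0) ∂μ := by
        rw [hind, integral_indicator_one hP, measureReal_restrict_apply hP, Set.inter_comm]
    _ = ∫ ω in s, (μ[fun ω => if P ω then (1 : ℝ) else 0 | m]) ω ∂μ :=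
        (setIntegral_condExp hm hint hs).symm
    _ = ∫ ω in s, g ω ∂μ := setIntegral_congr_ae (hm s hs) (hg.mono fun _ h _ => h)

variable {p : ℝ} {ℱ : Filtration ℕ m0} {D : ℕ → Ω → ℕ} {n : ℕ}

theorem measureReal_eq_inter_jump
    (hDn : Measurable[ℱ n] (D n)) (hDn1 : Measurable (D (n + 1)))
    (hcond : μ[fun ω => if D (n + 1) ω = D n ω + 1 then (1 : ℝ) else 0 | ℱ n]
      =ᵐ[μ] fun ω => p * (D n ω : ℝ) / n) (k : ℕ) :
    μ.real ({ω | D n ω = k} ∩ {ω | D (n + 1) ω = D n ω + 1})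
      = p / n * k * μ.real {ω | D n ω = k} := by
  have hk : MeasurableSet[ℱ n] {ω | D n ω = k} := hDn (measurableSet_singleton k)
  have hstep : MeasurableSet {ω | D (n + 1) ω = D n ω + 1} :=
    measurableSet_eq_fun hDn1 ((hDn.mono (ℱ.le n) le_rfl).add_const 1)
  rw [measureReal_inter_eq_setIntegral_of_condExp (ℱ.le n) hstep hcond hk,
    setIntegral_congr_fun (ℱ.le n _ hk) (g := fun _ => p * (k : ℝ) / n) fun ω hω => by
      rw [show D n ω = k from hω], setIntegral_const, smul_eq_mul]
  ring

theorem measureReal_succ_eq_add_one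
    (hDn : Measurable[ℱ n] (D n)) (hDn1 : Measurable (D (n + 1)))
    (hcond : μ[fun ω => if D (n + 1) ω = D n ω + 1 then (1 : ℝ) else 0 | ℱ n]
      =ᵐ[μ] fun ω => p * (D n ω : ℝ) / n)
    (hstep : ∀ᵐ ω ∂μ, D (n + 1) ω = D n ω ∨ D (n + 1) ω = D n ω + 1) (ℓ : ℕ) :
    μ.real {ω | D (n + 1) ω = ℓ + 1}
      = (1 - p / n * (ℓ + 1)) * μ.real {ω | D n ω = ℓ + 1}
        + p / n * ℓ * μ.real {ω | D n ω = ℓ} := by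
  set U := {ω | D (n + 1) ω = D n ω + 1}
  have hU : MeasurableSet U :=
    measurableSet_eq_fun hDn1 ((hDn.mono (ℱ.le n) le_rfl).add_const 1)
  have hsplit : {ω | D (n + 1) ω = ℓ + 1}
      =ᵐ[μ] ({ω | D n ω = ℓ + 1} \ U ∪ {ω | D n ω = ℓ} ∩ U : Set Ω) := by
    rw [eventuallyEq_set]
    filter_upwards [hstep] with ω hω
    simp only [U, Set.mem_union, Set.mem_sdiff, Set.mem_inter_iff, Set.mem_ofPred_eq]
    omega
  have hdisj : Disjoint ({ω | D n ω = ℓ + 1} \ U) ({ω | D n ω = ℓ} ∩ U) :=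
    Set.disjoint_left.2 fun _ h1 h2 => h1.2 h2.2
  have hUk := measureReal_inter_add_sdiff (μ := μ) (s := {ω | D n ω = ℓ + 1}) hU
  rw [measureReal_congr hsplit, measureReal_union hdisj
    ((hDn.mono (ℱ.le n) le_rfl (measurableSet_singleton ℓ)).inter hU),
    measureReal_eq_inter_jump hDn hDn1 hcond]
  rw [measureReal_eq_inter_jump hDn hDn1 hcond] at hUk
  push_cast at hUk
  linear_combination hUk

end

theorem stmt_16_general {Ω : Type*} {m0 : MeasurableSpace Ω} (μ : Measure Ω) [IsProbabilityMeasure μ]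
    (p : ℝ) (n0 a : ℕ) (ha1 : 1 ≤ a)
    (ℱ : Filtration ℕ m0) (D : ℕ → Ω → ℕ)
    (hadp : ∀ n, n0 ≤ n → Measurable[ℱ n] (D n))
    (hD0 : ∀ᵐ ω ∂μ, D n0 ω = a)
    (hstep : ∀ n, n0 ≤ n → ∀ᵐ ω ∂μ, D (n + 1) ω = D n ω ∨ D (n + 1) ω = D n ω + 1)
    (hcond : ∀ n, n0 ≤ n →
      μ[(fun ω => if D (n + 1) ω = D n ω + 1 then (1 : ℝ) else 0) | ℱ n]
        =ᵐ[μ] fun ω => p * (D n ω : ℝ) / n) :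
    ∀ n, n0 ≤ n → ∀ ℓ : ℕ, a ≤ ℓ →
      (μ {ω | D n ω = ℓ}).toReal
        = ∑ m ∈ Finset.Icc a ℓ,
            (-1 : ℝ) ^ (m - a) * ((ℓ - 1).choose (m - 1) : ℝ) *
              ((m - 1).choose (a - 1) : ℝ) *
              ∏ j ∈ Finset.Ico n0 n, (1 - p * m / j) := by
  intro n hn ℓ hℓ
  suffices h : ∀ k : ℕ, μ.real {ω | D n ω = k + 1}
      = degreeLaw a (fun m => ∏ j ∈ Ico n0 n, (1 - p * m / j)) (k + 1) by
    obtain ⟨k, rfl⟩ : ∃ k, ℓ = k + 1 := ⟨ℓ - 1, by omega⟩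
    exact h k
  induction n, hn using Nat.le_induction with
  | base =>
    intro k
    simp only [Ico_self, prod_empty]
    rw [measureReal_eq_of_ae_eq_const hD0, ← degreeLaw_one ha1]
    rfl
  | succ n hn ih =>
    intro k
    have hprod : (fun m : ℕ => ∏ j ∈ Ico n0 (n + 1), (1 - p * m / j))
        = fun m : ℕ => (∏ j ∈ Ico n0 n, (1 - p * m / j)) * (1 - p / n * m) := by
      funext m
      rw [prod_Ico_succ_top hn]
      ring
    rw [hprod, degreeLaw_mul_succ ha1, measureReal_succ_eq_add_one (hadp n hn)
      ((hadp (n + 1) (by omega)).mono (ℱ.le _) le_rfl) (hcond n hn) (hstep n hn), ih k]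
    rcases k with _ | k
    · simp
    · rw [ih k]

/-- For `n ≥ n0` and `ℓ ≥ a`,
`P(D_n = ℓ) = Σ_{m=a}^{ℓ} (−1)^{m−a} binom(ℓ−1,m−1) binom(m−1,a−1) ∏_{j=n0}^{n−1}(1 − pm/j)`. -/
theorem stmt_16 {Ω : Type*} {m0 : MeasurableSpace Ω} (μ : Measure Ω) [IsProbabilityMeasure μ]
    (p : ℝ) (hp0 : 0 < p) (hp1 : p ≤ 1) (n0 a : ℕ) (ha1 : 1 ≤ a) (han0 : a ≤ n0)
    (ℱ : Filtration ℕ m0) (D : ℕ → Ω → ℕ)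
    (hadp : ∀ n, n0 ≤ n → Measurable[ℱ n] (D n))
    (hpos : ∀ n, n0 ≤ n → ∀ᵐ ω ∂μ, 1 ≤ D n ω)
    (hD0 : ∀ᵐ ω ∂μ, D n0 ω = a)
    (hstep : ∀ n, n0 ≤ n → ∀ᵐ ω ∂μ, D (n + 1) ω = D n ω ∨ D (n + 1) ω = D n ω + 1)
    (hcond : ∀ n, n0 ≤ n →
      μ[(fun ω => if D (n + 1) ω = D n ω + 1 then (1 : ℝ) else 0) | ℱ n]
        =ᵐ[μ] fun ω => p * (D n ω : ℝ) / n) :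
    ∀ n, n0 ≤ n → ∀ ℓ : ℕ, a ≤ ℓ →
      (μ {ω | D n ω = ℓ}).toReal
        = ∑ m ∈ Finset.Icc a ℓ,
            (-1 : ℝ) ^ (m - a) * ((ℓ - 1).choose (m - 1) : ℝ) *
              ((m - 1).choose (a - 1) : ℝ) *
              ∏ j ∈ Finset.Ico n0 n, (1 - p * m / j) :=
  stmt_16_general μ p n0 a ha1 ℱ D hadp hD0 hstep hcond
end

section
/- For every p ∈ (0,1] and all real numbers a ≥ 1 and b ≥ 1, the positive numbers μ_m := Γ(a + m)·Γ(b) / (Γ(a)·Γ(b + p·m)), m = 1, 2, ..., satisfy Σ_{m=1}^{∞} μ_m^{−1/(2m)} = ∞. (This is Carleman's condition, so the Stieltjes moment problem with moment sequence (μ_m) is determinate.) -/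
/-!
Since `Γ ≥ 1/2` on `[1, ∞)` and `Γ(a + m) ≤ Γ(a) (a + m)^m`, the moments satisfy
`μ_m ≤ 2 Γ(b) (a + m)^m`. Hence `μ_m^{-1/(2m)} ≥ (2 Γ(b))^{-1/2} (a + m)^{-1/2}`,
which is at least a constant multiple of `1/m`, and Carleman's series dominates the harmonic series.
-/

open Filter

namespace Real

lemma one_le_Gamma_of_two_le {x : ℝ} (hx : 2 ≤ x) : 1 ≤ Gamma x :=
  Gamma_two ▸ Gamma_strictMonoOn_Ici.monotoneOn (Set.mem_Ici.mpr le_rfl) hx hx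

lemma half_le_Gamma_of_one_le {x : ℝ} (hx : 1 ≤ x) : 1 / 2 ≤ Gamma x := by
  rcases le_total 2 x with h2 | h2
  · linarith [one_le_Gamma_of_two_le h2]
  · have hx0 : 0 < x := by linarith
    have h : 1 ≤ x * Gamma x := Gamma_add_one hx0.ne' ▸ one_le_Gamma_of_two_le (by linarith)
    nlinarith [Gamma_pos_of_pos hx0]

lemma Gamma_add_nat_le {a : ℝ} (ha : 0 < a) (m : ℕ) :
    Gamma (a + m) ≤ Gamma a * (a + m) ^ m := by
  induction m with
  | zero => simp
  | succ n ih =>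
    have han : 0 < a + n := by positivity
    have hle : a + n ≤ a + n + 1 := by linarith
    have := (Gamma_pos_of_pos ha).le
    rw [Nat.cast_succ, ← add_assoc, Gamma_add_one han.ne', pow_succ']
    calc (a + n) * Gamma (a + n) ≤ (a + n) * (Gamma a * (a + n) ^ n) := by gcongr
      _ ≤ (a + n + 1) * (Gamma a * (a + n + 1) ^ n) := by gcongr
      _ = Gamma a * ((a + n + 1) * (a + n + 1) ^ n) := by ring

lemma inv_mul_rpow_neg_half_le_rpow {μ K x : ℝ} {m : ℕ} (hm : 0 < m) (hμ : 0 < μ) (hK : 1 ≤ K)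
    (hx : 1 ≤ x) (h : μ ≤ K * x ^ m) :
    K ^ (-(1 : ℝ) / 2) * x⁻¹ ≤ μ ^ (-(1 : ℝ) / (2 * m)) := by
  have hm' : (1 : ℝ) ≤ m := by exact_mod_cast hm
  have hx0 : 0 < x := by linarith
  calc K ^ (-(1 : ℝ) / 2) * x⁻¹ = K ^ (-(1 : ℝ) / 2) * x ^ (-(1 : ℝ)) := by rw [rpow_neg_one]
    _ ≤ K ^ (-(1 : ℝ) / (2 * m)) * x ^ (-(1 : ℝ) / 2) := by
        gcongr ?_ * ?_
        · exact rpow_le_rpow_of_exponent_le hK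
            (by rw [div_le_div_iff₀ (by norm_num) (by positivity)]; linarith)
        · exact rpow_le_rpow_of_exponent_le hx (by norm_num)
    _ = (K * x ^ m) ^ (-(1 : ℝ) / (2 * m)) := by
        rw [mul_rpow (by linarith) (by positivity), ← rpow_natCast x m, ← rpow_mul hx0.le]
        congr 2
        field_simp
    _ ≤ μ ^ (-(1 : ℝ) / (2 * m)) :=
        rpow_le_rpow_of_nonpos hμ h (div_nonpos_of_nonpos_of_nonneg (by norm_num) (by positivity))

end Real

lemma tendsto_sum_Icc_atTop_of_const_div_le {f : ℕ → ℝ} {c : ℝ} (hc : 0 < c)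
    (hf : ∀ m, 1 ≤ m → c / m ≤ f m) :
    Tendsto (fun N => ∑ m ∈ Finset.Icc 1 N, f m) atTop atTop := by
  refine tendsto_atTop_mono (fun N => ?_)
    (Real.tendsto_sum_range_one_div_nat_succ_atTop.const_mul_atTop hc)
  rw [Finset.mul_sum, ← Finset.Ico_add_one_right_eq_Icc, Finset.sum_Ico_eq_sum_range,
    Nat.add_sub_cancel]
  refine Finset.sum_le_sum fun k _ => ?_
  calc c * (1 / (k + 1)) = c / ↑(1 + k) := by push_cast; ring
    _ ≤ f (1 + k) := hf _ (Nat.le_add_right 1 k)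

noncomputable def gammaMoment (p a b : ℝ) (m : ℕ) : ℝ :=
  Real.Gamma (a + m) * Real.Gamma b / (Real.Gamma a * Real.Gamma (b + p * m))

section gammaMoment

open Real

variable {p a b : ℝ}

lemma gammaMoment_pos (hp : 0 ≤ p) (ha : 0 < a) (hb : 0 < b) (m : ℕ) :
    0 < gammaMoment p a b m := by
  unfold gammaMoment
  have := Gamma_pos_of_pos (show 0 < a + m by positivity)
  have := Gamma_pos_of_pos (show 0 < b + p * m by positivity)
  have := Gamma_pos_of_pos ha
  have := Gamma_pos_of_pos hb
  positivity

lemma gammaMoment_le (hp : 0 ≤ p) (ha : 0 < a) (hb : 1 ≤ b) (m : ℕ) :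
    gammaMoment p a b m ≤ 2 * Gamma b * (a + m) ^ m := by
  have hGa := Gamma_pos_of_pos ha
  have hGb := Gamma_pos_of_pos (show 0 < b by linarith)
  have hGbpm : 1 / 2 ≤ Gamma (b + p * m) := half_le_Gamma_of_one_le (by nlinarith)
  rw [gammaMoment, div_le_iff₀ (by positivity)]
  calc Gamma (a + m) * Gamma b ≤ Gamma a * (a + m) ^ m * Gamma b := by
        gcongr; exact Gamma_add_nat_le ha m
    _ = 2 * Gamma b * (a + m) ^ m * (Gamma a * (1 / 2)) := by ring
    _ ≤ 2 * Gamma b * (a + m) ^ m * (Gamma a * Gamma (b + p * m)) := by gcongr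

lemma const_div_le_gammaMoment_rpow (hp : 0 ≤ p) (ha : 0 < a) (hb : 1 ≤ b) {m : ℕ}
    (hm : 1 ≤ m) :
    (2 * Gamma b) ^ (-(1 : ℝ) / 2) / (a + 1) / m ≤
      gammaMoment p a b m ^ (-(1 : ℝ) / (2 * m)) := by
  have hm' : (1 : ℝ) ≤ m := by exact_mod_cast hm
  calc (2 * Gamma b) ^ (-(1 : ℝ) / 2) / (a + 1) / m
      = (2 * Gamma b) ^ (-(1 : ℝ) / 2) * ((a + 1) * m)⁻¹ := by rw [mul_inv]; ring
    _ ≤ (2 * Gamma b) ^ (-(1 : ℝ) / 2) * (a + m)⁻¹ := by gcongr; nlinarith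
    _ ≤ gammaMoment p a b m ^ (-(1 : ℝ) / (2 * m)) :=
        inv_mul_rpow_neg_half_le_rpow hm (gammaMoment_pos hp ha (by linarith) m)
          (by linarith [half_le_Gamma_of_one_le hb]) (by linarith) (gammaMoment_le hp ha hb m)

end gammaMoment

theorem stmt_19_general (p : ℝ) (hp0 : 0 < p) (a b : ℝ) (ha : 1 ≤ a) (hb : 1 ≤ b) :
    Tendsto (fun N : ℕ => ∑ m ∈ Finset.Icc 1 N,
        (Real.Gamma (a + m) * Real.Gamma b / (Real.Gamma a * Real.Gamma (b + p * m)))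
          ^ (-(1 : ℝ) / (2 * m)))
      atTop atTop :=
  tendsto_sum_Icc_atTop_of_const_div_le (by positivity) fun _ hm =>
    const_div_le_gammaMoment_rpow hp0.le (by linarith) hb hm

/-- For `p ∈ (0,1]` and reals `a, b ≥ 1`, the moments
`μ_m := Γ(a+m)Γ(b)/(Γ(a)Γ(b+pm))` satisfy Carleman's condition
`Σ_{m=1}^∞ μ_m^{-1/(2m)} = ∞`, i.e. the partial sums tend to infinity. -/
theorem stmt_19 (p : ℝ) (hp0 : 0 < p) (hp1 : p ≤ 1) (a b : ℝ) (ha : 1 ≤ a) (hb : 1 ≤ b) :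
    Tendsto (fun N : ℕ => ∑ m ∈ Finset.Icc 1 N,
        (Real.Gamma (a + m) * Real.Gamma b / (Real.Gamma a * Real.Gamma (b + p * m)))
          ^ (-(1 : ℝ) / (2 * m)))
      atTop atTop :=
  stmt_19_general p hp0 a b ha hb
end
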